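/- arXiv:1005.1328 — 8 statements merged into one kernel-verified Lean document; each statement's English description precedes it below -/
import Mathlib

section
/- For every positive integer n and every permutation π of {1,...,n}, the T-graph T_π is 2P_3-free and Sun_4-free (and hence, since 2P_3 is an induced subgraph of P_7, also P_7-free). -/
/-- `H` is (isomorphic to) an induced subgraph of `G`. -/
def IsInducedSubgraph {α β : Type*} (H : SimpleGraph α) (G : SimpleGraph β) : Prop :=
  ∃ f : α → β, Function.Injective f ∧ ∀ u v, G.Adj (f u) (f v) ↔ H.Adj u v

/-- `H` is (isomorphic to) a not necessarily induced subgraph of `G`. -/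
def IsSubgraphOf {α β : Type*} (H : SimpleGraph α) (G : SimpleGraph β) : Prop :=
  ∃ f : α → β, Function.Injective f ∧ ∀ u v, H.Adj u v → G.Adj (f u) (f v)

/-- `G` contains no induced subgraph isomorphic to `H`. -/
def HFree {α β : Type*} (H : SimpleGraph α) (G : SimpleGraph β) : Prop :=
  ¬ IsInducedSubgraph H G

/-- A graph is bipartite if its vertex set splits into two independent sets. -/
def IsBipartite {V : Type*} (G : SimpleGraph V) : Prop :=
  ∃ c : V → Bool, ∀ u v, G.Adj u v → c u ≠ c v

/-- The chordless path `P_k` on `k` vertices. -/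
def pathN (k : ℕ) : SimpleGraph (Fin k) :=
  SimpleGraph.fromRel (fun u v => u.val + 1 = v.val)

/-- The chordless cycle `C_4`. -/
def c4 : SimpleGraph (Fin 4) :=
  SimpleGraph.fromRel (fun u v => (u.val, v.val) ∈ [(0,1),(1,2),(2,3),(3,0)])

/-- `Sun_1`: a `C_4` (on 0,1,2,3) with one pendant vertex 4 attached to 0. -/
def sun1 : SimpleGraph (Fin 5) :=
  SimpleGraph.fromRel (fun u v => (u.val, v.val) ∈ [(0,1),(1,2),(2,3),(3,0),(0,4)])

/-- `Sun_4`: a `C_4` (on 0,1,2,3) with pendant vertices 4,5,6,7 attached to 0,1,2,3. -/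
def sun4 : SimpleGraph (Fin 8) :=
  SimpleGraph.fromRel (fun u v =>
    (u.val, v.val) ∈ [(0,1),(1,2),(2,3),(3,0),(0,4),(1,5),(2,6),(3,7)])

/-- `2P_3`: the disjoint union of two chordless paths on 3 vertices. -/
def twoP3 : SimpleGraph (Fin 6) :=
  SimpleGraph.fromRel (fun u v => (u.val, v.val) ∈ [(0,1),(1,2),(3,4),(4,5)])

/-- `S_{1,2,3}`: the 7-vertex tree with one degree-3 vertex (vertex 0) whose three
leaves (1, 3, 6) are at distances 1, 2 and 3 from it. -/
def s123 : SimpleGraph (Fin 7) :=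
  SimpleGraph.fromRel (fun u v => (u.val, v.val) ∈ [(0,1),(0,2),(2,3),(0,4),(4,5),(5,6)])

/-- The bipartite complement of `P_8` (vertices `0..7`, path edges `i (i+1)`,
parts = even vertices / odd vertices): an even and an odd vertex are adjacent
iff they are not consecutive. -/
def p8tilde : SimpleGraph (Fin 8) :=
  SimpleGraph.fromRel (fun u v =>
    u.val % 2 = 0 ∧ v.val % 2 = 1 ∧ u.val + 1 ≠ v.val ∧ v.val + 1 ≠ u.val)

/-- The T-graph `T_π` for a permutation (given as a map) `π` of `Fin n`.
Vertices: `A ⊕ B ⊕ C ⊕ D`, with edges exactly: `a_i b_{π(i)}`; all `c_i d_j`;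
`a_i d_j` for `j ≤ i`; `b_i c_j` for `j ≤ i`. -/
def Tgraph {n : ℕ} (π : Fin n → Fin n) : SimpleGraph (Fin n ⊕ Fin n ⊕ Fin n ⊕ Fin n) :=
  SimpleGraph.fromRel (fun u v =>
    match u, v with
    | Sum.inl i, Sum.inr (Sum.inl j) => π i = j
    | Sum.inr (Sum.inr (Sum.inl _)), Sum.inr (Sum.inr (Sum.inr _)) => True
    | Sum.inl i, Sum.inr (Sum.inr (Sum.inr j)) => j ≤ i
    | Sum.inr (Sum.inl i), Sum.inr (Sum.inr (Sum.inl j)) => j ≤ i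
    | _, _ => False)

/-- The S-graph for witnessing (convex) permutations `μ, ρ` of a biconvex
permutation `π = μ ∘ ρ⁻¹`. Vertices: `A ⊕ B ⊕ C`, edges exactly:
`b_i a_j` for `j ≤ ρ(i)` and `b_i c_j` for `j ≤ μ(i)`. -/
def Sgraph {n : ℕ} (μ ρ : Fin n → Fin n) : SimpleGraph (Fin n ⊕ Fin n ⊕ Fin n) :=
  SimpleGraph.fromRel (fun u v =>
    match u, v with
    | Sum.inr (Sum.inl i), Sum.inl j => j ≤ ρ i
    | Sum.inr (Sum.inl i), Sum.inr (Sum.inr j) => j ≤ μ i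
    | _, _ => False)

/-- The permutation graph of `π`: `i ~ j` iff `(i - j)(π(i) - π(j)) < 0`. -/
def permGraph {n : ℕ} (π : Fin n → Fin n) : SimpleGraph (Fin n) :=
  SimpleGraph.fromRel (fun u v => u < v ∧ π v < π u)

/-- The universal graph `H_{k,n}`: vertex `(i,j)` is adjacent to `(i+1,j')` iff `j' ≤ j`. -/
def Hgraph (k n : ℕ) : SimpleGraph (Fin k × Fin n) :=
  SimpleGraph.fromRel (fun u v => v.1.val = u.1.val + 1 ∧ v.2.val ≤ u.2.val)

/-- Pattern containment of (one-line) sequences: `π` is contained in `ρ` if `ρ` has a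
subsequence order-isomorphic to `π`. -/
def Contained {m n : ℕ} (π : Fin m → ℕ) (ρ : Fin n → ℕ) : Prop :=
  ∃ f : Fin m → Fin n, StrictMono f ∧ ∀ i j, π i ≤ π j ↔ ρ (f i) ≤ ρ (f j)

/-- Value at (1-indexed) position `p` of the one-line notation of the permutation
`π*_n = (4, 2, 6, 1, 8, 3, …, 2j, 2j−5, …, n−1, n−3)` of Section 2.1. -/
def pistarVal (n p : ℕ) : ℕ :=
  if p = 1 then 4
  else if p = 2 then 2
  else if p = n - 1 then n - 1
  else if p = n then n - 3
  else if p % 2 = 1 then p + 3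
  else p - 3

/-- `π*_n` of Section 2.1 as a (0-indexed) sequence of natural numbers. -/
def pistar (n : ℕ) : Fin n → ℕ := fun i => pistarVal n (i.val + 1)

/-- `π*_n` of Section 2.1 as a (0-indexed) map `Fin n → Fin n`. -/
def pistarFin (n : ℕ) : Fin n → Fin n :=
  fun i => ⟨(pistarVal n (i.val + 1) - 1) % n, Nat.mod_lt _ i.pos⟩

/-- Value at (1-indexed) position `p` of the one-line notation of the permutation
`π*_n = (2, 3, 5, 1, …, 2j+3, 2j, …, n, n−4, n−1, n−2)` of Section 2.2. -/
def pi2starVal (n p : ℕ) : ℕ :=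
  if p = 1 then 2
  else if p = 2 then 3
  else if p = 3 then 5
  else if p = 4 then 1
  else if p = n - 3 then n
  else if p = n - 2 then n - 4
  else if p = n - 1 then n - 1
  else if p = n then n - 2
  else if p % 2 = 1 then p + 2
  else p - 2

/-- `π*_n` of Section 2.2 as a (0-indexed) map `Fin n → Fin n`. -/
def pi2starFin (n : ℕ) : Fin n → Fin n :=
  fun i => ⟨(pi2starVal n (i.val + 1) - 1) % n, Nat.mod_lt _ i.pos⟩

/-- Value at (1-indexed) position `p` of the one-line notation of
`ρ*_n = (1, 2, 3, 5, …, n−3, n−1, n, n−2, …, 6, 4)`. -/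
def rhostarVal (n p : ℕ) : ℕ :=
  if p = 1 then 1
  else if p = 2 then 2
  else if p ≤ n / 2 + 1 then 2 * p - 3
  else if p = n / 2 + 2 then n
  else 2 * n - 2 * p + 4

/-- `ρ*_n` as a (0-indexed) map `Fin n → Fin n`. -/
def rhostarFin (n : ℕ) : Fin n → Fin n :=
  fun i => ⟨(rhostarVal n (i.val + 1) - 1) % n, Nat.mod_lt _ i.pos⟩

/-- Value at (1-indexed) position `p` of the one-line notation of
`μ*_n = (2, 3, 5, …, n−3, n, n−1, n−2, n−4, …, 6, 4, 1)`. -/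
def mustarVal (n p : ℕ) : ℕ :=
  if p = 1 then 2
  else if p ≤ n / 2 - 1 then 2 * p - 1
  else if p = n / 2 then n
  else if p = n / 2 + 1 then n - 1
  else if p ≤ n - 1 then 2 * n - 2 * p + 2
  else 1

/-- `μ*_n` as a (0-indexed) map `Fin n → Fin n`. -/
def mustarFin (n : ℕ) : Fin n → Fin n :=
  fun i => ⟨(mustarVal n (i.val + 1) - 1) % n, Nat.mod_lt _ i.pos⟩

/-- A map `ρ : Fin n → Fin n` is convex if for every `i` the set of positions `p`
with `i ≤ ρ p` is a set of consecutive elements. -/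
def IsConvexFun {n : ℕ} (ρ : Fin n → Fin n) : Prop :=
  ∀ i p q r : Fin n, p ≤ q → q ≤ r → i ≤ ρ p → i ≤ ρ r → i ≤ ρ q

/-- A graph is biconvex if it has a bipartition `(X, Xᶜ)` and a linear order
(induced by an injection into `ℕ`) on the vertices such that every neighborhood
of a vertex of `X` is an interval of `Xᶜ` and vice versa. -/
def IsBiconvex {V : Type*} (G : SimpleGraph V) : Prop :=
  ∃ (X : Set V) (f : V → ℕ), Function.Injective f ∧
    (∀ u v, G.Adj u v → (u ∈ X ↔ v ∉ X)) ∧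
    (∀ x ∈ X, ∀ u v w, u ∉ X → v ∉ X → w ∉ X → f u ≤ f v → f v ≤ f w →
      G.Adj x u → G.Adj x w → G.Adj x v) ∧
    (∀ y ∉ X, ∀ u v w, u ∈ X → v ∈ X → w ∈ X → f u ≤ f v → f v ≤ f w →
      G.Adj y u → G.Adj y w → G.Adj y v)

/-- `G` is a permutation graph: isomorphic to `permGraph π` for some permutation `π`. -/
def IsPermutationGraph {V : Type*} (G : SimpleGraph V) : Prop :=
  ∃ (n : ℕ) (π : Fin n → Fin n), Function.Bijective π ∧ Nonempty (G ≃g permGraph π)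

/-- `G` is a `k`-letter graph: there is a partition of the vertices into `p ≤ k`
classes, each a clique or an independent set, and a linear order (an injection
into `ℕ`) such that the edges between any two distinct classes form one of the
four prescribed patterns. -/
def IsKLetterGraph {V : Type*} (k : ℕ) (G : SimpleGraph V) : Prop :=
  ∃ (p : ℕ) (_ : p ≤ k) (P : V → Fin p) (L : V → ℕ), Function.Injective L ∧
    (∀ i : Fin p,
      (∀ u v, P u = i → P v = i → u ≠ v → G.Adj u v) ∨
      (∀ u v, P u = i → P v = i → ¬ G.Adj u v)) ∧
    (∀ i j : Fin p, i ≠ j →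
      (∀ u v, P u = i → P v = j → (G.Adj u v ↔ L u < L v)) ∨
      (∀ u v, P u = i → P v = j → (G.Adj u v ↔ L v < L u)) ∨
      (∀ u v, P u = i → P v = j → G.Adj u v) ∨
      (∀ u v, P u = i → P v = j → ¬ G.Adj u v))

/-!
Outside the perfect matching `a_i b_{π i}`, the T-graph is a chain graph: with `rank a_i = i`,
`rank d_j = j` and `rank b_k = 2n - k`, `rank c_l = 2n - l`, an edge meeting `C ∪ D` joins
`x ∈ A ∪ C` to `y ∈ B ∪ D` exactly when `rank y ≤ rank x`. Comparing ranks, of two edges with no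
edge between them one avoids `C ∪ D`, i.e. is a matching edge.

A `P_3` is not contained in a matching, so each path of an induced `2P_3` would contain an edge
meeting `C ∪ D`, with no edge between the two. In an induced `Sun_4` the pendant edges at
opposite cycle vertices are pairs of this kind, so two adjacent cycle vertices `w, w'` avoid
`C ∪ D` and the pendant edge at `w` is a matching edge; then `w` has two distinct neighbours in
`A ∪ B`. Finally `2P_3` is an induced subgraph of `P_7`.
-/

theorem IsInducedSubgraph.trans {α β γ : Type*} {H : SimpleGraph α} {H' : SimpleGraph β}
    {G : SimpleGraph γ} (h : IsInducedSubgraph H H') (h' : IsInducedSubgraph H' G) :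
    IsInducedSubgraph H G := by
  obtain ⟨f, hf, hfadj⟩ := h
  obtain ⟨g, hg, hgadj⟩ := h'
  exact ⟨g ∘ f, hg.comp hf, fun u v => (hgadj _ _).trans (hfadj u v)⟩

theorem HFree.of_isInducedSubgraph {α β γ : Type*} {H : SimpleGraph α} {H' : SimpleGraph β}
    {G : SimpleGraph γ} (hG : HFree H G) (h : IsInducedSubgraph H H') : HFree H' G :=
  fun h' => hG (h.trans h')

theorem twoP3_isInducedSubgraph_pathN_seven : IsInducedSubgraph twoP3 (pathN 7) := by
  refine ⟨![0, 1, 2, 4, 5, 6], by decide, fun u v => ?_⟩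
  fin_cases u <;> fin_cases v <;> simp [twoP3, pathN]

namespace Tgraph

variable {n : ℕ} {π : Fin n → Fin n} {u v w x y z x' y' : Fin n ⊕ Fin n ⊕ Fin n ⊕ Fin n}

def IsACVertex : Fin n ⊕ Fin n ⊕ Fin n ⊕ Fin n → Prop
  | Sum.inl _ | Sum.inr (Sum.inr (Sum.inl _)) => True
  | _ => False

def IsCDVertex : Fin n ⊕ Fin n ⊕ Fin n ⊕ Fin n → Prop
  | Sum.inr (Sum.inr _) => True
  | _ => False

def rank : Fin n ⊕ Fin n ⊕ Fin n ⊕ Fin n → ℕ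
  | Sum.inl i => i
  | Sum.inr (Sum.inl k) => 2 * n - k
  | Sum.inr (Sum.inr (Sum.inl l)) => 2 * n - l
  | Sum.inr (Sum.inr (Sum.inr j)) => j

theorem isACVertex_iff_not_of_adj (hxy : (Tgraph π).Adj x y) : IsACVertex x ↔ ¬ IsACVertex y := by
  rcases x with i | i | i | i <;> rcases y with j | j | j | j <;> simp_all [IsACVertex, Tgraph]

theorem adj_of_rank_le (hx : IsACVertex x) (hy : ¬ IsACVertex y) (h : rank y ≤ rank x) :
    (Tgraph π).Adj x y := by
  rcases x with i | i | i | i <;> rcases y with j | j | j | j <;>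
    simp_all [IsACVertex, Tgraph, rank] <;> omega

theorem rank_le_of_adj (hx : IsACVertex x) (hy : ¬ IsACVertex y) (hxy : (Tgraph π).Adj x y)
    (hcd : IsCDVertex x ∨ IsCDVertex y) : rank y ≤ rank x := by
  rcases x with i | i | i | i <;> rcases y with j | j | j | j <;>
    simp_all [IsACVertex, IsCDVertex, Tgraph, rank] <;> omega

theorem eq_of_adj_of_adj (hπ : Function.Injective π)
    (hx : ¬ IsCDVertex x) (hy : ¬ IsCDVertex y) (hz : ¬ IsCDVertex z)
    (hxy : (Tgraph π).Adj x y) (hxz : (Tgraph π).Adj x z) : y = z := by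
  rcases x with i | i | i | i <;> rcases y with j | j | j | j <;> rcases z with k | k | k | k <;>
    simp_all [IsCDVertex, Tgraph]
  exact hπ (hxy.trans hxz.symm)

theorem not_isCDVertex_of_anticomplete
    (hxy : (Tgraph π).Adj x y) (hx'y' : (Tgraph π).Adj x' y')
    (hxx' : ¬ (Tgraph π).Adj x x') (hxy' : ¬ (Tgraph π).Adj x y')
    (hyx' : ¬ (Tgraph π).Adj y x') (hyy' : ¬ (Tgraph π).Adj y y') :
    (¬ IsCDVertex x ∧ ¬ IsCDVertex y) ∨ (¬ IsCDVertex x' ∧ ¬ IsCDVertex y') := by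
  wlog hx : IsACVertex x generalizing x y
  · refine (this hxy.symm hyx' hyy' hxx' hxy' ?_).imp_left And.symm
    exact (isACVertex_iff_not_of_adj hxy.symm).2 hx
  wlog hx' : IsACVertex x' generalizing x' y'
  · refine (this hx'y'.symm hxy' hxx' hyy' hyx' ?_).imp_right And.symm
    exact (isACVertex_iff_not_of_adj hx'y'.symm).2 hx'
  have hy := (isACVertex_iff_not_of_adj hxy).1 hx
  have hy' := (isACVertex_iff_not_of_adj hx'y').1 hx'
  rw [← not_or, ← not_or, ← not_and_or]
  rintro ⟨hcd, hcd'⟩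
  have hr := rank_le_of_adj hx hy hxy hcd
  have hr' := rank_le_of_adj hx' hy' hx'y' hcd'
  rcases le_total (rank x) (rank x') with h | h
  · exact hyx' (adj_of_rank_le hx' hy (hr.trans h)).symm
  · exact hxy' (adj_of_rank_le hx hy' (hr'.trans h))

theorem exists_adj_isCDVertex (hπ : Function.Injective π)
    (hvu : (Tgraph π).Adj v u) (hvw : (Tgraph π).Adj v w) (huw : u ≠ w) :
    ∃ x ∈ ({u, v, w} : Set _), ∃ y ∈ ({u, v, w} : Set _), (Tgraph π).Adj x y ∧ IsCDVertex y := by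
  by_cases hv : IsCDVertex v
  · exact ⟨u, by simp, v, by simp, hvu.symm, hv⟩
  by_cases hu : IsCDVertex u
  · exact ⟨v, by simp, u, by simp, hvu, hu⟩
  by_cases hw : IsCDVertex w
  · exact ⟨v, by simp, w, by simp, hvw, hw⟩
  exact absurd (eq_of_adj_of_adj hπ hv hu hw hvu hvw) huw

theorem twoP3_free (hπ : Function.Injective π) : HFree twoP3 (Tgraph π) := by
  rintro ⟨f, hf, hadj⟩
  have cross : ∀ x ∈ ({f 0, f 1, f 2} : Set _), ∀ y ∈ ({f 3, f 4, f 5} : Set _),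
      ¬ (Tgraph π).Adj x y := by
    simp only [Set.mem_insert_iff, Set.mem_singleton_iff]
    rintro _ (rfl | rfl | rfl) _ (rfl | rfl | rfl) <;> simp [hadj, twoP3]
  obtain ⟨x, hx, y, hy, hxy, hcd⟩ := exists_adj_isCDVertex hπ ((hadj 1 0).2 (by simp [twoP3]))
    ((hadj 1 2).2 (by simp [twoP3])) (hf.ne (by decide))
  obtain ⟨x', hx', y', hy', hx'y', hcd'⟩ := exists_adj_isCDVertex hπ
    ((hadj 4 3).2 (by simp [twoP3])) ((hadj 4 5).2 (by simp [twoP3])) (hf.ne (by decide))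
  rcases not_isCDVertex_of_anticomplete hxy hx'y' (cross x hx x' hx') (cross x hx y' hy')
    (cross y hy x' hx') (cross y hy y' hy') with ⟨-, h⟩ | ⟨-, h⟩
  exacts [h hcd, h hcd']

theorem sun4_free (hπ : Function.Injective π) : HFree sun4 (Tgraph π) := by
  rintro ⟨f, hf, hadj⟩
  have adj (i j : Fin 8) (h : sun4.Adj i j) : (Tgraph π).Adj (f i) (f j) := (hadj i j).2 h
  have nadj (i j : Fin 8) (h : ¬ sun4.Adj i j) : ¬ (Tgraph π).Adj (f i) (f j) :=
    (hadj i j).not.2 h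
  have clash (i j k : Fin 8) (hij : sun4.Adj i j) (hik : sun4.Adj i k) (hjk : j ≠ k)
      (hi : ¬ IsCDVertex (f i)) (hj : ¬ IsCDVertex (f j)) (hk : ¬ IsCDVertex (f k)) : False :=
    hjk (hf (eq_of_adj_of_adj hπ hi hj hk (adj i j hij) (adj i k hik)))
  have h02 := not_isCDVertex_of_anticomplete (adj 0 4 (by simp [sun4])) (adj 2 6 (by simp [sun4]))
    (nadj 0 2 (by simp [sun4])) (nadj 0 6 (by simp [sun4])) (nadj 4 2 (by simp [sun4]))
    (nadj 4 6 (by simp [sun4]))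
  have h13 := not_isCDVertex_of_anticomplete (adj 1 5 (by simp [sun4])) (adj 3 7 (by simp [sun4]))
    (nadj 1 3 (by simp [sun4])) (nadj 1 7 (by simp [sun4])) (nadj 5 3 (by simp [sun4]))
    (nadj 5 7 (by simp [sun4]))
  rcases h02 with ⟨h0, h4⟩ | ⟨h2, h6⟩ <;> rcases h13 with ⟨h1, -⟩ | ⟨h3, -⟩
  · exact clash 0 4 1 (by simp [sun4]) (by simp [sun4]) (by decide) h0 h4 h1
  · exact clash 0 4 3 (by simp [sun4]) (by simp [sun4]) (by decide) h0 h4 h3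
  · exact clash 2 6 1 (by simp [sun4]) (by simp [sun4]) (by decide) h2 h6 h1
  · exact clash 2 6 3 (by simp [sun4]) (by simp [sun4]) (by decide) h2 h6 h3

end Tgraph

theorem Tgraph_twoP3_sun4_free_general (n : ℕ) (π : Equiv.Perm (Fin n)) :
    HFree twoP3 (Tgraph ⇑π) ∧ HFree sun4 (Tgraph ⇑π) ∧ HFree (pathN 7) (Tgraph ⇑π) := by
  have h2P3 := Tgraph.twoP3_free π.injective
  exact ⟨h2P3, Tgraph.sun4_free π.injective,
    h2P3.of_isInducedSubgraph twoP3_isInducedSubgraph_pathN_seven⟩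

/-- For every positive integer `n` and every permutation `π` of
`{1,…,n}`, the T-graph `T_π` is `2P_3`-free and `Sun_4`-free (hence also
`P_7`-free, since `2P_3` is an induced subgraph of `P_7`). -/
theorem Tgraph_twoP3_sun4_free (n : ℕ) (hn : 0 < n) (π : Equiv.Perm (Fin n)) :
    HFree twoP3 (Tgraph ⇑π) ∧ HFree sun4 (Tgraph ⇑π) ∧ HFree (pathN 7) (Tgraph ⇑π) :=
  Tgraph_twoP3_sun4_free_general n π
end

section
/- The permutations π*_6, π*_8, π*_10, ... form an infinite antichain with respect to the pattern containment relation on permutations: for all even m, n with 6 ≤ m < n, the permutation π*_m is not contained in π*_n. -/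
set_option maxHeartbeats 1000000 in
/-- Arithmetic characterization of the values of `pistarVal`. -/
lemma pvChar (n p : ℕ) (hn2 : n % 2 = 0) (hn : 6 ≤ n) (hp : 1 ≤ p) (hpn : p ≤ n) :
    (p = 1 ∧ pistarVal n p = 4) ∨ (p = 2 ∧ pistarVal n p = 2) ∨
    (p = n - 1 ∧ pistarVal n p = n - 1) ∨ (p = n ∧ pistarVal n p = n - 3) ∨
    (p % 2 = 1 ∧ 3 ≤ p ∧ p ≤ n - 3 ∧ pistarVal n p = p + 3) ∨
    (p % 2 = 0 ∧ 4 ≤ p ∧ p ≤ n - 2 ∧ pistarVal n p = p - 3) := by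
  unfold pistarVal
  split_ifs <;> omega

set_option maxHeartbeats 1000000 in
/-- Characterization of the (position) inversions of `π*_n`. -/
lemma invChar (n v w : ℕ) (hn2 : n % 2 = 0) (hn : 6 ≤ n) (hv : 1 ≤ v)
    (hvw : v < w) (hw : w ≤ n) (h : pistarVal n w < pistarVal n v) :
    (v = 1 ∧ (w = 2 ∨ w = 4 ∨ w = 6)) ∨ (v = 2 ∧ w = 4) ∨
    (v % 2 = 1 ∧ 3 ≤ v ∧ v ≤ n - 5 ∧ (w = v + 1 ∨ w = v + 3 ∨ w = v + 5)) ∨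
    (v = n - 3 ∧ (w = n - 2 ∨ w = n - 1 ∨ w = n)) ∨ (v = n - 1 ∧ w = n) := by
  have h1 := pvChar n v hn2 hn hv (by omega)
  have h2 := pvChar n w hn2 hn (by omega) hw
  omega


/-- The permutations `π*_6, π*_8, π*_10, …` of Section 2.1 form an
infinite antichain for pattern containment: for all even `m, n` with
`6 ≤ m < n`, `π*_m` is not contained in `π*_n`. -/

theorem pistar_antichain (m n : ℕ) (hme : Even m) (hne : Even n)
    (hm : 6 ≤ m) (hmn : m < n) :
    ¬ Contained (pistar m) (pistar n) := by
  rintro ⟨f, hf, hiff⟩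
  have hm2 : m % 2 = 0 := Nat.even_iff.mp hme
  have hn2 : n % 2 = 0 := Nat.even_iff.mp hne
  have hn6 : 6 ≤ n := by omega
  -- a 1-indexed version of `f`
  obtain ⟨g, hgval⟩ : ∃ g : ℕ → ℕ, ∀ p (h : p - 1 < m),
      g p = (f ⟨p - 1, h⟩).val + 1 :=
    ⟨fun p => if h : p - 1 < m then (f ⟨p - 1, h⟩).val + 1 else 0,
      fun p h => dif_pos h⟩
  have hmono : ∀ p q, 1 ≤ p → p < q → q ≤ m → g p < g q := by
    intro p q h1 h2 h3
    have hp : p - 1 < m := by omega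
    have hq : q - 1 < m := by omega
    rw [hgval p hp, hgval q hq]
    have h7 : (f ⟨p - 1, hp⟩).val < (f ⟨q - 1, hq⟩).val :=
      hf (show (⟨p - 1, hp⟩ : Fin m) < ⟨q - 1, hq⟩ from Fin.mk_lt_mk.mpr (by omega))
    omega
  have hrange : ∀ p, 1 ≤ p → p ≤ m → 1 ≤ g p ∧ g p ≤ n := by
    intro p h1 h2
    have hp : p - 1 < m := by omega
    rw [hgval p hp]
    have := (f ⟨p - 1, hp⟩).isLt
    omega
  have hinv : ∀ p q, 1 ≤ p → p < q → q ≤ m → pistarVal m q < pistarVal m p →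
      pistarVal n (g q) < pistarVal n (g p) := by
    intro p q h1 h2 h3 h4
    have hp : p - 1 < m := by omega
    have hq : q - 1 < m := by omega
    have h5 : pistarVal m (p - 1 + 1) ≤ pistarVal m (q - 1 + 1) ↔
        pistarVal n ((f ⟨p - 1, hp⟩).val + 1) ≤ pistarVal n ((f ⟨q - 1, hq⟩).val + 1) :=
      hiff ⟨p - 1, hp⟩ ⟨q - 1, hq⟩
    rw [show p - 1 + 1 = p by omega, show q - 1 + 1 = q by omega,
      ← hgval p hp, ← hgval q hq] at h5
    omega
  -- one step of the downward rigidity induction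
  have step : ∀ k, k % 2 = 1 → 1 ≤ k → k + 5 ≤ m →
      g (k + 2) = (k + 2) + (n - m) → g (k + 3) = (k + 3) + (n - m) →
      g (k + 5) = (k + 5) + (n - m) →
      g k = k + (n - m) ∧ g (k + 1) = (k + 1) + (n - m) := by
    intro k hk1 hk2 hk3 e2 e3 e5
    have i1 : pistarVal m (k + 1) < pistarVal m k ∧
        pistarVal m (k + 3) < pistarVal m k ∧ pistarVal m (k + 5) < pistarVal m k := by
      have q0 := pvChar m k hm2 hm (by omega) (by omega)
      have q1 := pvChar m (k + 1) hm2 hm (by omega) (by omega)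
      have q3 := pvChar m (k + 3) hm2 hm (by omega) (by omega)
      have q5 := pvChar m (k + 5) hm2 hm (by omega) (by omega)
      omega
    have t1 := hinv k (k + 1) hk2 (by omega) (by omega) i1.1
    have t2 := hinv k (k + 3) hk2 (by omega) (by omega) i1.2.1
    have t3 := hinv k (k + 5) hk2 (by omega) (by omega) i1.2.2
    have ha := hmono k (k + 1) hk2 (by omega) (by omega)
    have hb := hmono (k + 1) (k + 2) (by omega) (by omega) (by omega)
    have r0 := hrange k hk2 (by omega)
    have r1 := hrange (k + 1) (by omega) (by omega)
    have c1 := invChar n (g k) (g (k + 1)) hn2 hn6 r0.1 ha r1.2 t1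
    have c2 := invChar n (g k) (g (k + 3)) hn2 hn6 r0.1 (by omega) (by omega) t2
    have c3 := invChar n (g k) (g (k + 5)) hn2 hn6 r0.1 (by omega) (by omega) t3
    omega
  -- the rigidity induction: the top of the pattern is pinned to the top of π*_n
  have key : ∀ t, 2 * t + 4 ≤ m → ∀ j, m - 3 - 2 * t ≤ j → j ≤ m →
      g j = j + (n - m) := by
    intro t
    induction t with
    | zero =>
      intro _ j hj1 hj2
      have i1 : pistarVal m (m - 2) < pistarVal m (m - 3) ∧
          pistarVal m (m - 1) < pistarVal m (m - 3) ∧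
          pistarVal m m < pistarVal m (m - 3) ∧
          pistarVal m m < pistarVal m (m - 1) := by
        have q3 := pvChar m (m - 3) hm2 hm (by omega) (by omega)
        have q2 := pvChar m (m - 2) hm2 hm (by omega) (by omega)
        have q1 := pvChar m (m - 1) hm2 hm (by omega) (by omega)
        have q0 := pvChar m m hm2 hm (by omega) le_rfl
        omega
      have t1 := hinv (m - 3) (m - 2) (by omega) (by omega) (by omega) i1.1
      have t2 := hinv (m - 3) (m - 1) (by omega) (by omega) (by omega) i1.2.1
      have t3 := hinv (m - 3) m (by omega) (by omega) le_rfl i1.2.2.1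
      have t4 := hinv (m - 1) m (by omega) (by omega) le_rfl i1.2.2.2
      have ha := hmono (m - 3) (m - 2) (by omega) (by omega) (by omega)
      have hb := hmono (m - 2) (m - 1) (by omega) (by omega) (by omega)
      have hc := hmono (m - 1) m (by omega) (by omega) le_rfl
      have r3 := hrange (m - 3) (by omega) (by omega)
      have r2 := hrange (m - 2) (by omega) (by omega)
      have r1 := hrange (m - 1) (by omega) (by omega)
      have r0 := hrange m (by omega) le_rfl
      have c1 := invChar n (g (m - 3)) (g (m - 2)) hn2 hn6 r3.1 ha r2.2 t1
      have c2 := invChar n (g (m - 3)) (g (m - 1)) hn2 hn6 r3.1 (by omega) r1.2 t2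
      have c3 := invChar n (g (m - 3)) (g m) hn2 hn6 r3.1 (by omega) r0.2 t3
      have c4 := invChar n (g (m - 1)) (g m) hn2 hn6 r1.1 hc r0.2 t4
      have hfour : g (m - 3) = m - 3 + (n - m) ∧ g (m - 2) = m - 2 + (n - m) ∧
          g (m - 1) = m - 1 + (n - m) ∧ g m = m + (n - m) := by omega
      rcases (show j = m - 3 ∨ j = m - 2 ∨ j = m - 1 ∨ j = m by omega) with
        rfl | rfl | rfl | rfl <;> omega
    | succ t ih =>
      intro ht j hj1 hj2
      have IH := ih (by omega)
      have e2 := IH (m - 5 - 2 * t + 2) (by omega) (by omega)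
      have e3 := IH (m - 5 - 2 * t + 3) (by omega) (by omega)
      have e5 := IH (m - 5 - 2 * t + 5) (by omega) (by omega)
      have hs := step (m - 5 - 2 * t) (by omega) (by omega) (by omega) e2 e3 e5
      rcases (show j = m - 5 - 2 * t ∨ j = m - 5 - 2 * t + 1 ∨ m - 5 - 2 * t + 2 ≤ j
        by omega) with rfl | rfl | h
      · exact hs.1
      · exact hs.2
      · exact IH j (by omega) hj2
  have hfin := key ((m - 4) / 2) (by omega)
  have g2 := hfin 2 (by omega) (by omega)
  have g4 := hfin 4 (by omega) (by omega)
  have i24 : pistarVal m 4 < pistarVal m 2 := by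
    have q2 := pvChar m 2 hm2 hm (by omega) (by omega)
    have q4 := pvChar m 4 hm2 hm (by omega) (by omega)
    omega
  have t24 := hinv 2 4 (by omega) (by omega) (by omega) i24
  have h24 := hmono 2 4 (by omega) (by omega) (by omega)
  have r2 := hrange 2 (by omega) (by omega)
  have r4 := hrange 4 (by omega) (by omega)
  have c := invChar n (g 2) (g 4) hn2 hn6 r2.1 h24 r4.2 t24
  omega
end

section
/- The T-graphs T_{π*_6}, T_{π*_8}, T_{π*_10}, ... form an infinite antichain with respect to the induced subgraph relation: for all even m, n with 6 ≤ m < n, the graph T_{π*_m} is not isomorphic to an induced subgraph of T_{π*_n}. -/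
/-!
Lay out `T_π` on two lines: the part `A ∪ C` as `a_1, …, a_n, c_n, …, c_1` and the part `B ∪ D`
as `d_1, …, d_n, b_n, …, b_1`, at positions `1, …, 2n`. A vertex at position `x` of the first line
and one at position `y` of the second are adjacent iff `y ≤ x`, except for the matching edges
`a_i b_{π i}`, which go up from `i` to `2n + 1 - π i`.

An induced copy of `T_σ` in `T_τ` keeps or exchanges the two parts, and exchanging `a ↔ b`,
`c ↔ d` is an isomorphism `T_τ ≅ T_{τ⁻¹}`. A part-preserving copy has to respect the layout as
soon as at least two positions separate each `a_i` from its partner `b_{σ i}`: it sends matching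
edges to matching edges and is increasing on both lines, so `σ` is a pattern of `τ` or of `τ⁻¹`.

The `π*_n` are involutions, and `π*_m` is not a pattern of `π*_n`. The only middle entries of
`321`-patterns of `π*_n` sit at positions `2` and `n - 1`, so an occurrence of `π*_m` fixes `2`
and sends `m - 1` to `n - 1`. Going up from the left end, the interlocking pairs of `π*` force the
occurrence to fix `1, …, m - 3`; but `π*_m (m - 3) = m > π*_m (m - 1)`, whereas
`π*_n (m - 3) = m < π*_n (n - 1)`.
-/

open Set

-- `π*_n` with positions and values shifted down to `0, …, n - 1`
def pistarNat (n k : ℕ) : ℕ :=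
  if k = 1 then 1 else if k = n - 2 then n - 2 else if k % 2 = 0 then k + 3 else k - 3

section pistarNat

variable {n k : ℕ}

lemma pistarNat_lt (hn : Even n) (hk : k < n) : pistarNat n k < n := by
  have := Nat.even_iff.mp hn
  unfold pistarNat; split_ifs <;> omega

lemma pistarNat_pistarNat (hn : Even n) (hk : k < n) :
    pistarNat n (pistarNat n k) = k := by
  have := Nat.even_iff.mp hn
  unfold pistarNat; split_ifs <;> omega

lemma add_pistarNat_add_four_le (hn : Even n) (h6 : 6 ≤ n) (hk : k < n) :
    k + pistarNat n k + 4 ≤ 2 * n := by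
  have := Nat.even_iff.mp hn
  unfold pistarNat; split_ifs <;> omega

lemma pistarNat_one : pistarNat n 1 = 1 := if_pos rfl

lemma pistarNat_sub_two : pistarNat n (n - 2) = n - 2 := by
  unfold pistarNat; split_ifs <;> omega

lemma pistarNat_of_even (hk : k % 2 = 0) (h : k ≠ n - 2) : pistarNat n k = k + 3 := by
  unfold pistarNat; split_ifs <;> omega

lemma pistarNat_of_odd (hk : k % 2 = 1) (h1 : k ≠ 1) (h : k ≠ n - 2) :
    pistarNat n k = k - 3 := by
  unfold pistarNat; split_ifs <;> omega

lemma eq_one_or_eq_sub_two_of_pistarNat_lt {x' x x'' : ℕ} (h' : x' < x) (h'' : x < x'')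
    (hx' : pistarNat n x < pistarNat n x') (hx'' : pistarNat n x'' < pistarNat n x) :
    x = 1 ∨ x = n - 2 := by
  unfold pistarNat at hx' hx''; split_ifs at hx' hx'' <;> omega

lemma pistarVal_succ (hn : Even n) (h6 : 6 ≤ n) (hk : k < n) :
    pistarVal n (k + 1) = pistarNat n k + 1 := by
  have := Nat.even_iff.mp hn
  unfold pistarVal pistarNat; split_ifs <;> omega

lemma pistarFin_val (hn : Even n) (h6 : 6 ≤ n) (i : Fin n) :
    (pistarFin n i : ℕ) = pistarNat n i := by
  simp only [pistarFin, pistarVal_succ hn h6 i.isLt, Nat.add_sub_cancel]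
  exact Nat.mod_eq_of_lt (pistarNat_lt hn i.isLt)

lemma pistar_eq (hn : Even n) (h6 : 6 ≤ n) :
    pistar n = (· + 1) ∘ fun i => (pistarFin n i : ℕ) := by
  funext i
  simp only [Function.comp, pistar, pistarFin_val hn h6, pistarVal_succ hn h6 i.isLt]

lemma pistarFin_involutive (hn : Even n) (h6 : 6 ≤ n) : Function.Involutive (pistarFin n) :=
  fun i => Fin.ext <| by
    rw [pistarFin_val hn h6, pistarFin_val hn h6, pistarNat_pistarNat hn i.isLt]

end pistarNat

lemma contained_comp_iff {m n : ℕ} {π : Fin m → ℕ} {ρ : Fin n → ℕ} {g : ℕ → ℕ}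
    (hg : StrictMono g) : Contained (g ∘ π) (g ∘ ρ) ↔ Contained π ρ := by
  simp only [Contained, Function.comp, hg.le_iff_le]

lemma exists_strictMonoOn_of_contained {m n : ℕ} {P Q : ℕ → ℕ}
    (hP : ∀ k < m, P k < m ∧ P (P k) = k)
    (h : Contained (fun i : Fin m => P i) (fun j : Fin n => Q j)) :
    ∃ α β : ℕ → ℕ, StrictMonoOn α (Iio m) ∧ StrictMonoOn β (Iio m) ∧
      ∀ i < m, α i < n ∧ Q (α i) = β (P i) := by
  obtain ⟨f, hf, hPQ⟩ := h
  let α : ℕ → ℕ := fun i => if hi : i < m then f ⟨i, hi⟩ else 0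
  have hα : ∀ i (hi : i < m), α i = f ⟨i, hi⟩ := fun i hi => dif_pos hi
  refine ⟨α, fun v => Q (α (P v)), fun i hi j hj hij => ?_, fun v hv w hw hvw => ?_,
    fun i hi => ⟨?_, ?_⟩⟩
  · rw [hα i hi, hα j hj]
    exact hf hij
  · have h := hPQ ⟨P w, (hP w hw).1⟩ ⟨P v, (hP v hv).1⟩
    simp only [(hP w hw).2, (hP v hv).2, ← hα] at h
    exact not_le.mp fun hle => not_le.mpr hvw (h.mpr hle)
  · rw [hα i hi]
    exact (f _).isLt
  · simp only [(hP i hi).2]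

section occurrence

variable {m n : ℕ} {α β : ℕ → ℕ} (hα : StrictMonoOn α (Iio m)) (hβ : StrictMonoOn β (Iio m))
  (hαβ : ∀ i < m, α i < n ∧ pistarNat n (α i) = β (pistarNat m i))
include hα hβ hαβ

lemma pistarNat_occurrence_middle (hm : Even m) {i j k : ℕ} (hij : i < j) (hjk : j < k)
    (hk : k < m) (hPij : pistarNat m j < pistarNat m i) (hPjk : pistarNat m k < pistarNat m j) :
    α j = 1 ∨ α j = n - 2 := by
  have hP : ∀ l < m, pistarNat m l ∈ Iio m := fun l hl => pistarNat_lt hm hl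
  refine eq_one_or_eq_sub_two_of_pistarNat_lt (hα (show i < m by omega) (show j < m by omega) hij)
    (hα (show j < m by omega) hk hjk) ?_ ?_
  · rw [(hαβ i (by omega)).2, (hαβ j (by omega)).2]
    exact hβ (hP j (by omega)) (hP i (by omega)) hPij
  · rw [(hαβ j (by omega)).2, (hαβ k hk).2]
    exact hβ (hP k hk) (hP j (by omega)) hPjk

lemma pistarNat_occurrence_anchors (hm : Even m) (hm6 : 6 ≤ m) (hmn : m < n) :
    α 1 = 1 ∧ α (m - 2) = n - 2 := by
  have := Nat.even_iff.mp hm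
  have h₁ : α 1 = 1 ∨ α 1 = n - 2 := pistarNat_occurrence_middle hα hβ hαβ hm (i := 0) (k := 3)
    one_pos (by norm_num) (by omega)
    (by rw [pistarNat_one, pistarNat_of_even (by norm_num) (by omega)]; omega)
    (by rw [pistarNat_one, pistarNat_of_odd (by norm_num) (by omega) (by omega)]; omega)
  have h₂ : α (m - 2) = 1 ∨ α (m - 2) = n - 2 := pistarNat_occurrence_middle hα hβ hαβ hm
    (i := m - 4) (k := m - 1) (by omega) (by omega) (by omega)
    (by rw [pistarNat_sub_two, pistarNat_of_even (by omega) (by omega)]; omega)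
    (by rw [pistarNat_sub_two, pistarNat_of_odd (by omega) (by omega) (by omega)]; omega)
  have := hα (show 1 < m by omega) (show m - 2 < m by omega) (by omega)
  omega

lemma pistarNat_occurrence_step (hn : Even n) (hmn : m < n) {q : ℕ} (hq : q % 2 = 0)
    (hqm : q + 6 ≤ m) (h : α q = q ∧ α (q + 1) = q + 1 ∧ β q = q ∧ β (q + 1) = q + 1) :
    α (q + 2) = q + 2 ∧ α (q + 3) = q + 3 ∧ β (q + 2) = q + 2 ∧ β (q + 3) = q + 3 := by
  obtain ⟨hα₀, hα₁, hβ₀, hβ₁⟩ := h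
  have hβ₃ : β (q + 3) = q + 3 := by
    have h := (hαβ q (by omega)).2
    rwa [hα₀, pistarNat_of_even (n := n) hq (by omega), pistarNat_of_even (n := m) hq (by omega),
      eq_comm] at h
  have hα₃ : α (q + 3) = q + 3 := by
    have h := hαβ (q + 3) (by omega)
    rw [pistarNat_of_odd (n := m) (by omega) (by omega) (by omega), Nat.add_sub_cancel, hβ₀] at h
    rw [← pistarNat_pistarNat hn h.1, h.2, pistarNat_of_even hq (by omega)]
  have := hα (show q + 1 < m by omega) (show q + 2 < m by omega) (by omega)
  have := hα (show q + 2 < m by omega) (show q + 3 < m by omega) (by omega)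
  have := hβ (show q + 1 < m by omega) (show q + 2 < m by omega) (by omega)
  have := hβ (show q + 2 < m by omega) (show q + 3 < m by omega) (by omega)
  omega

lemma pistarNat_occurrence_sub_four (hm : Even m) (hn : Even n) (hm6 : 6 ≤ m) (hmn : m < n) :
    α (m - 4) = m - 4 := by
  have := Nat.even_iff.mp hm
  have hα₁ := (pistarNat_occurrence_anchors hα hβ hαβ hm hm6 hmn).1
  have hβ₁ : β 1 = 1 := by
    have h := (hαβ 1 (by omega)).2
    rwa [hα₁, pistarNat_one, pistarNat_one, eq_comm] at h
  have key : ∀ t, 2 * t + 4 ≤ m → α (2 * t) = 2 * t ∧ α (2 * t + 1) = 2 * t + 1 ∧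
      β (2 * t) = 2 * t ∧ β (2 * t + 1) = 2 * t + 1 := by
    intro t
    induction t with
    | zero =>
      intro _
      simp only [Nat.mul_zero, Nat.zero_add]
      have := hα (show 0 < m by omega) (show 1 < m by omega) one_pos
      have := hβ (show 0 < m by omega) (show 1 < m by omega) one_pos
      omega
    | succ t ih =>
      intro ht
      exact pistarNat_occurrence_step hα hβ hαβ hn hmn (q := 2 * t) (by omega) (by omega)
        (ih (by omega))
  have := (key ((m - 4) / 2) (by omega)).1
  rwa [show 2 * ((m - 4) / 2) = m - 4 by omega] at this

end occurrence

theorem pistar_not_contained {m n : ℕ} (hm : Even m) (hn : Even n) (hm6 : 6 ≤ m) (hmn : m < n) :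
    ¬ Contained (pistar m) (pistar n) := by
  rw [pistar_eq hm hm6, pistar_eq hn (by omega),
    contained_comp_iff (g := (· + 1)) fun _ _ h => Nat.add_lt_add_right h 1]
  simp only [pistarFin_val hm hm6, pistarFin_val hn (by omega : 6 ≤ n)]
  intro h
  obtain ⟨α, β, hα, hβ, hαβ⟩ := exists_strictMonoOn_of_contained
    (fun k hk => ⟨pistarNat_lt hm hk, pistarNat_pistarNat hm hk⟩) h
  have := Nat.even_iff.mp hm
  have hαm := (pistarNat_occurrence_anchors hα hβ hαβ hm hm6 hmn).2
  have hβm₁ := (hαβ (m - 4) (by omega)).2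
  rw [pistarNat_occurrence_sub_four hα hβ hαβ hm hn hm6 hmn,
    pistarNat_of_even (by omega) (by omega), pistarNat_of_even (by omega) (by omega)] at hβm₁
  have hβm₂ := (hαβ (m - 2) (by omega)).2
  rw [hαm, pistarNat_sub_two, pistarNat_sub_two] at hβm₂
  have := hβ (show m - 2 < m by omega) (show m - 4 + 3 < m by omega) (by omega)
  omega

namespace Tgraph

variable {m n : ℕ}

abbrev Vertex (n : ℕ) := Fin n ⊕ Fin n ⊕ Fin n ⊕ Fin n

def side : Vertex n → Bool
  | .inl _ | .inr (.inr (.inl _)) => false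
  | .inr (.inl _) | .inr (.inr (.inr _)) => true

-- positions in the layout, counted from `0`
def pos : Vertex n → ℕ
  | .inl i => i
  | .inr (.inl k) => 2 * n - 1 - k
  | .inr (.inr (.inl t)) => 2 * n - 1 - t
  | .inr (.inr (.inr j)) => j

def leftVertex (hn : 0 < n) (x : ℕ) : Vertex n :=
  if h : x < n then .inl ⟨x, h⟩ else .inr (.inr (.inl ⟨2 * n - 1 - x, by omega⟩))

def rightVertex (hn : 0 < n) (y : ℕ) : Vertex n :=
  if h : y < n then .inr (.inr (.inr ⟨y, h⟩)) else .inr (.inl ⟨2 * n - 1 - y, by omega⟩)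

def partner (π : Fin n → Fin n) (x : ℕ) : ℕ :=
  if h : x < n then 2 * n - 1 - π ⟨x, h⟩ else 0

def LayoutAdj (π : Fin n → Fin n) (x y : ℕ) : Prop :=
  y ≤ x ∨ (x < n ∧ y = partner π x)

def swap : Vertex n → Vertex n
  | .inl i => .inr (.inl i)
  | .inr (.inl k) => .inl k
  | .inr (.inr (.inl t)) => .inr (.inr (.inr t))
  | .inr (.inr (.inr j)) => .inr (.inr (.inl j))

lemma side_ne_of_adj {π : Fin n → Fin n} {u v : Vertex n} (h : (Tgraph π).Adj u v) : side u ≠ side v := by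
  rcases u with _ | _ | _ | _ <;> rcases v with _ | _ | _ | _ <;>
    simp_all [Tgraph, side]

lemma eq_of_side_eq_of_pos_eq {u v : Vertex n} (hs : side u = side v) (hp : pos u = pos v) :
    u = v := by
  rcases u with i | i | i | i <;> rcases v with j | j | j | j <;>
    simp only [side, pos, reduceCtorEq, Sum.inl.injEq, Sum.inr.injEq, Fin.ext_iff] at hs hp ⊢ <;>
    omega

lemma pos_lt (v : Vertex n) : pos v < 2 * n := by
  rcases v with i | i | i | i <;> simp only [pos] <;> omega

lemma side_leftVertex (hn : 0 < n) (x : ℕ) : side (leftVertex hn x) = false := by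
  unfold leftVertex; split_ifs <;> rfl

lemma side_rightVertex (hn : 0 < n) (y : ℕ) : side (rightVertex hn y) = true := by
  unfold rightVertex; split_ifs <;> rfl

lemma pos_leftVertex (hn : 0 < n) {x : ℕ} (hx : x < 2 * n) : pos (leftVertex hn x) = x := by
  unfold leftVertex; split_ifs <;> simp only [pos]
  omega

lemma pos_rightVertex (hn : 0 < n) {y : ℕ} (hy : y < 2 * n) : pos (rightVertex hn y) = y := by
  unfold rightVertex; split_ifs <;> simp only [pos]
  omega

lemma partner_of_lt (π : Fin n → Fin n) {x : ℕ} (hx : x < n) :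
    partner π x = 2 * n - 1 - π ⟨x, hx⟩ :=
  dif_pos hx

lemma partner_val (π : Fin n → Fin n) (i : Fin n) : partner π i = 2 * n - 1 - π i :=
  partner_of_lt π i.isLt

lemma adj_inl_inr_inl {π : Fin n → Fin n} {i k : Fin n} :
    (Tgraph π).Adj (.inl i) (.inr (.inl k)) ↔ π i = k := by
  simp [Tgraph]

lemma adj_inl_inr_inr_inr {π : Fin n → Fin n} {i j : Fin n} :
    (Tgraph π).Adj (.inl i) (.inr (.inr (.inr j))) ↔ j ≤ i := by
  simp [Tgraph]

lemma adj_inr_inr_inl_inr_inl {π : Fin n → Fin n} {t k : Fin n} :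
    (Tgraph π).Adj (.inr (.inr (.inl t))) (.inr (.inl k)) ↔ t ≤ k := by
  simp [Tgraph]

lemma adj_inr_inr_inl_inr_inr_inr {π : Fin n → Fin n} {t j : Fin n} :
    (Tgraph π).Adj (.inr (.inr (.inl t))) (.inr (.inr (.inr j))) := by
  simp [Tgraph]

lemma adj_iff_layoutAdj {π : Fin n → Fin n} {u v : Vertex n}
    (hu : side u = false) (hv : side v = true) :
    (Tgraph π).Adj u v ↔ LayoutAdj π (pos u) (pos v) := by
  rcases u with i | _ | t | _ <;> rcases v with _ | k | _ | j <;>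
    simp only [side, reduceCtorEq] at hu hv
  · rw [adj_inl_inr_inl]
    simp only [LayoutAdj, pos, partner_val, Fin.ext_iff]
    have := (π i).isLt
    omega
  · rw [adj_inl_inr_inr_inr]
    simp only [LayoutAdj, pos, partner_val, Fin.le_def]
    have := (π i).isLt
    omega
  · rw [adj_inr_inr_inl_inr_inl]
    simp only [LayoutAdj, pos, Fin.le_def]
    omega
  · simp only [adj_inr_inr_inl_inr_inr_inr, LayoutAdj, pos, true_iff]
    omega

lemma le_partner {π : Fin n → Fin n} {x : ℕ} (hx : x < n) : n ≤ partner π x := by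
  have := (π ⟨x, hx⟩).isLt
  rw [partner_of_lt π hx]
  omega

lemma partner_lt {π : Fin n → Fin n} {x : ℕ} (hx : x < n) : partner π x < 2 * n := by
  rw [partner_of_lt π hx]
  omega

lemma add_three_le_partner {π : Fin n → Fin n} (hgap : ∀ i : Fin n, (i : ℕ) + π i + 4 ≤ 2 * n)
    {x : ℕ} (hx : x < n) : x + 3 ≤ partner π x := by
  have : x + (π ⟨x, hx⟩ : ℕ) + 4 ≤ 2 * n := hgap ⟨x, hx⟩
  rw [partner_of_lt π hx]
  omega

lemma partner_injOn {π : Fin n → Fin n} (hπ : Function.Injective π) {x x' : ℕ} (hx : x < n)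
    (hx' : x' < n) (h : partner π x = partner π x') : x = x' := by
  have := (π ⟨x, hx⟩).isLt
  have := (π ⟨x', hx'⟩).isLt
  rw [partner_of_lt π hx, partner_of_lt π hx'] at h
  have := @hπ ⟨x, hx⟩ ⟨x', hx'⟩ (Fin.ext (by omega))
  exact Fin.mk.inj this

lemma exists_partner_eq {π : Fin n → Fin n} (hπ : Function.Surjective π) {y : ℕ} (hy : n ≤ y)
    (hy' : y < 2 * n) : ∃ x < n, partner π x = y := by
  obtain ⟨i, hi⟩ := hπ ⟨2 * n - 1 - y, by omega⟩
  refine ⟨i, i.isLt, ?_⟩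
  rw [partner_val, hi, Fin.val_mk]
  omega

lemma side_swap (u : Vertex n) : side (swap u) = !side u := by
  rcases u with _ | _ | _ | _ <;> rfl

lemma swap_involutive : Function.Involutive (swap (n := n)) := by
  rintro (_ | _ | _ | _) <;> rfl

lemma adj_swap (τ : Equiv.Perm (Fin n)) {u v : Vertex n} :
    (Tgraph τ.symm).Adj (swap u) (swap v) ↔ (Tgraph τ).Adj u v := by
  rcases u with _ | _ | _ | _ <;> rcases v with _ | _ | _ | _ <;>
    simp [Tgraph, swap, Equiv.eq_symm_apply, eq_comm]

lemma side_comp_eq_or_eq_not {σ : Fin m → Fin m} {τ : Fin n → Fin n} {f : Vertex m → Vertex n}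
    (hf : ∀ u v, (Tgraph σ).Adj u v → (Tgraph τ).Adj (f u) (f v)) :
    (∀ u, side (f u) = side u) ∨ ∀ u, side (f u) = !side u := by
  rcases m.eq_zero_or_pos with rfl | hm
  · exact Or.inl fun u => by rcases u with i | i | i | i <;> exact i.elim0
  -- every vertex of `A ∪ C` is adjacent to `d₀`, every vertex of `B ∪ D` to `c₀`
  let c₀ : Vertex m := .inr (.inr (.inl ⟨0, hm⟩))
  let d₀ : Vertex m := .inr (.inr (.inr ⟨0, hm⟩))
  have hleft : ∀ u, side u = false → side (f u) = !side (f d₀) := fun u hu =>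
    Bool.eq_not_iff.mpr <| side_ne_of_adj <|
      hf _ _ ((adj_iff_layoutAdj hu rfl).mpr (Or.inl (Nat.zero_le _)))
  have hright : ∀ v, side v = true → side (f v) = side (f d₀) := fun v hv => by
    have hadj : (Tgraph σ).Adj c₀ v := (adj_iff_layoutAdj rfl hv).mpr <| Or.inl <| by
      have := pos_lt v
      show pos v ≤ 2 * m - 1 - 0
      omega
    rw [Bool.eq_not_iff.mpr (side_ne_of_adj (hf _ _ hadj)).symm, hleft c₀ rfl, Bool.not_not]
  cases hd₀ : side (f d₀) <;> [right; left] <;> intro u <;> cases hu : side u <;>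
    simp [hleft, hright, hu, hd₀]

structure LayoutEmbedding (σ : Fin m → Fin m) (τ : Fin n → Fin n) (Φ Ψ : ℕ → ℕ) : Prop where
  injOn_left : InjOn Φ (Iio (2 * m))
  injOn_right : InjOn Ψ (Iio (2 * m))
  layoutAdj_iff : ∀ i < 2 * m, ∀ j < 2 * m, LayoutAdj τ (Φ i) (Ψ j) ↔ LayoutAdj σ i j

namespace LayoutEmbedding

variable {σ : Fin m → Fin m} {τ : Fin n → Fin n} {Φ Ψ : ℕ → ℕ} {i j : ℕ}

lemma lt_of_not_layoutAdj (e : LayoutEmbedding σ τ Φ Ψ) (hi : i < 2 * m) (hj : j < 2 * m)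
    (h : ¬ LayoutAdj σ i j) : Φ i < Ψ j :=
  not_le.mp fun hle => h ((e.layoutAdj_iff i hi j hj).mp (Or.inl hle))

lemma self_layoutAdj (e : LayoutEmbedding σ τ Φ Ψ) (hi : i < 2 * m) :
    Ψ i ≤ Φ i ∨ (Φ i < n ∧ Ψ i = partner τ (Φ i)) :=
  (e.layoutAdj_iff i hi i hi).mpr (Or.inl le_rfl)

lemma map_partner (e : LayoutEmbedding σ τ Φ Ψ) (hσ : Function.Injective σ)
    (hgap : ∀ i : Fin m, (i : ℕ) + σ i + 4 ≤ 2 * m) (hi : i < m) :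
    Φ i < n ∧ Ψ (partner σ i) = partner τ (Φ i) := by
  set p := partner σ i
  have hip : i + 3 ≤ p := add_three_le_partner hgap hi
  have hp : p < 2 * m := partner_lt hi
  refine ((e.layoutAdj_iff i (by omega) p hp).mpr (Or.inr ⟨hi, rfl⟩)).resolve_left fun hle => ?_
  -- otherwise every position strictly between `i` and `p` would carry a matching edge as well
  have between : ∀ j, i < j → j < p → Φ j < n ∧ Ψ j = partner τ (Φ j) := by
    intro j hij hjp
    have hΦi : Φ i < Ψ j :=
      e.lt_of_not_layoutAdj (by omega) (by omega) (by rintro (h | ⟨-, h⟩) <;> omega)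
    refine (e.self_layoutAdj (by omega)).resolve_left fun hj => ?_
    rcases (e.layoutAdj_iff j (by omega) p hp).mp (Or.inl (by omega)) with h | ⟨hjm, h⟩
    · omega
    · have := partner_injOn hσ hi hjm h
      omega
  obtain ⟨h₁n, h₁⟩ := between (i + 1) (by omega) (by omega)
  obtain ⟨h₂n, h₂⟩ := between (i + 2) (by omega) (by omega)
  rcases (e.layoutAdj_iff (i + 2) (by omega) (i + 1) (by omega)).mpr (Or.inl (by omega))
    with h | ⟨-, h⟩
  · have := le_partner (π := τ) h₁n
    omega
  · have := e.injOn_right (show i + 1 < 2 * m by omega) (show i + 2 < 2 * m by omega)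
      (h.trans h₂.symm)
    omega

lemma right_le_left (e : LayoutEmbedding σ τ Φ Ψ) (hσ : Function.Bijective σ)
    (hgap : ∀ i : Fin m, (i : ℕ) + σ i + 4 ≤ 2 * m) (hτ : Function.Injective τ)
    (hi : i < 2 * m) : Ψ i ≤ Φ i := by
  refine (e.self_layoutAdj hi).resolve_right fun ⟨hin, heq⟩ => ?_
  rcases lt_or_ge i m with him | him
  · have := e.injOn_right (show partner σ i < 2 * m from partner_lt him) hi
      ((e.map_partner hσ.1 hgap him).2.trans heq.symm)
    have := add_three_le_partner hgap him
    omega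
  · obtain ⟨i₀, hi₀, rfl⟩ := exists_partner_eq hσ.2 him hi
    obtain ⟨hi₀n, h⟩ := e.map_partner hσ.1 hgap hi₀
    have := e.injOn_left (show i₀ < 2 * m by omega) hi
      (partner_injOn hτ hi₀n hin (h.symm.trans heq))
    omega

lemma strictMonoOn_right (e : LayoutEmbedding σ τ Φ Ψ) (hσ : Function.Bijective σ)
    (hgap : ∀ i : Fin m, (i : ℕ) + σ i + 4 ≤ 2 * m) (hτ : Function.Injective τ) :
    StrictMonoOn Ψ (Iio (2 * m)) := by
  intro j hj j' hj' hjj'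
  have := e.right_le_left hσ hgap hτ hj
  by_cases hmatch : j < m ∧ j' = partner σ j
  · obtain ⟨hjm, rfl⟩ := hmatch
    obtain ⟨hjn, h⟩ := e.map_partner hσ.1 hgap hjm
    have := le_partner (π := τ) hjn
    omega
  · have := e.lt_of_not_layoutAdj hj hj' (by rintro (h | h) <;> [omega; exact hmatch h])
    omega

lemma strictMonoOn_left (e : LayoutEmbedding σ τ Φ Ψ) (hσ : Function.Bijective σ)
    (hgap : ∀ i : Fin m, (i : ℕ) + σ i + 4 ≤ 2 * m) (hτ : Function.Injective τ) :
    StrictMonoOn Φ (Iio (2 * m)) := by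
  intro i hi i' hi' hii'
  by_cases hmatch : i < m ∧ i' = partner σ i
  · obtain ⟨him, rfl⟩ := hmatch
    have := add_three_le_partner hgap him
    have := partner_lt (π := σ) him
    have h₁ := e.lt_of_not_layoutAdj (j := i + 1) hi (by omega) (by rintro (h | ⟨-, h⟩) <;> omega)
    have h₂ := e.lt_of_not_layoutAdj (j := i + 2) hi (by omega) (by rintro (h | ⟨-, h⟩) <;> omega)
    rcases (e.layoutAdj_iff _ hi' (i + 1) (by omega)).mpr (Or.inl (by omega)) with h₁' | ⟨-, h₁'⟩
    · omega
    rcases (e.layoutAdj_iff _ hi' (i + 2) (by omega)).mpr (Or.inl (by omega)) with h₂' | ⟨-, h₂'⟩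
    · omega
    have := e.injOn_right (show i + 1 < 2 * m by omega) (show i + 2 < 2 * m by omega)
      (h₁'.trans h₂'.symm)
    omega
  · have := e.lt_of_not_layoutAdj hi hi' (by rintro (h | h) <;> [omega; exact hmatch h])
    have := e.right_le_left hσ hgap hτ hi'
    omega

theorem contained (e : LayoutEmbedding σ τ Φ Ψ) (hσ : Function.Bijective σ)
    (hgap : ∀ i : Fin m, (i : ℕ) + σ i + 4 ≤ 2 * m) (hτ : Function.Injective τ) :
    Contained (fun i => (σ i : ℕ)) (fun j => (τ j : ℕ)) := by
  have hΦ := e.strictMonoOn_left hσ hgap hτ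
  have hmatched := fun i : Fin m => e.map_partner hσ.1 hgap i.isLt
  refine ⟨fun i => ⟨Φ i, (hmatched i).1⟩, fun i j hij => ?_, fun i j => ?_⟩
  · exact hΦ (show (i : ℕ) < 2 * m by omega) (show (j : ℕ) < 2 * m by omega) hij
  · have hΨ := (e.strictMonoOn_right hσ hgap hτ).le_iff_le
      (partner_lt (π := σ) j.isLt) (partner_lt (π := σ) i.isLt)
    rw [(hmatched i).2, (hmatched j).2] at hΨ
    rw [partner_val, partner_val, partner_of_lt τ (hmatched i).1,
      partner_of_lt τ (hmatched j).1] at hΨ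
    have := (σ i).isLt
    have := (σ j).isLt
    have := (τ ⟨Φ i, (hmatched i).1⟩).isLt
    have := (τ ⟨Φ j, (hmatched j).1⟩).isLt
    simp only
    omega

end LayoutEmbedding

lemma exists_layoutEmbedding (hm : 0 < m) {σ : Fin m → Fin m} {τ : Fin n → Fin n}
    {f : Vertex m → Vertex n} (hf : Function.Injective f)
    (hadj : ∀ u v, (Tgraph τ).Adj (f u) (f v) ↔ (Tgraph σ).Adj u v)
    (hside : ∀ u, side (f u) = side u) :
    ∃ Φ Ψ, LayoutEmbedding σ τ Φ Ψ := by
  have hfl := fun x => (hside (leftVertex hm x)).trans (side_leftVertex hm x)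
  have hfr := fun y => (hside (rightVertex hm y)).trans (side_rightVertex hm y)
  refine ⟨fun x => pos (f (leftVertex hm x)), fun y => pos (f (rightVertex hm y)),
    fun x hx x' hx' h => ?_, fun y hy y' hy' h => ?_, fun x hx y hy => ?_⟩
  · rw [← pos_leftVertex hm hx, ← pos_leftVertex hm hx',
      hf (eq_of_side_eq_of_pos_eq ((hfl x).trans (hfl x').symm) h)]
  · rw [← pos_rightVertex hm hy, ← pos_rightVertex hm hy',
      hf (eq_of_side_eq_of_pos_eq ((hfr y).trans (hfr y').symm) h)]
  · rw [← adj_iff_layoutAdj (hfl x) (hfr y), hadj, adj_iff_layoutAdj (side_leftVertex hm x)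
      (side_rightVertex hm y), pos_leftVertex hm hx, pos_rightVertex hm hy]

theorem contained_of_isInducedSubgraph {σ : Fin m → Fin m} (hσ : Function.Bijective σ)
    (hgap : ∀ i : Fin m, (i : ℕ) + σ i + 4 ≤ 2 * m) (τ : Equiv.Perm (Fin n))
    (h : IsInducedSubgraph (Tgraph σ) (Tgraph τ)) :
    Contained (fun i => (σ i : ℕ)) (fun j => (τ j : ℕ)) ∨
      Contained (fun i => (σ i : ℕ)) (fun j => (τ.symm j : ℕ)) := by
  rcases m.eq_zero_or_pos with rfl | hm
  · exact Or.inl ⟨Fin.elim0, fun i => i.elim0, fun i => i.elim0⟩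
  obtain ⟨f, hf, hadj⟩ := h
  rcases side_comp_eq_or_eq_not fun u v huv => (hadj u v).mpr huv with hside | hside
  · obtain ⟨Φ, Ψ, e⟩ := exists_layoutEmbedding hm hf hadj hside
    exact Or.inl (e.contained hσ hgap τ.injective)
  · obtain ⟨Φ, Ψ, e⟩ := exists_layoutEmbedding (f := swap ∘ f) hm
      (swap_involutive.injective.comp hf) (fun u v => adj_swap τ |>.trans (hadj u v))
      (fun u => by rw [Function.comp_apply, side_swap, hside, Bool.not_not])
    exact Or.inr (e.contained hσ hgap τ.symm.injective)

end Tgraph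

/-- The T-graphs `T_{π*_6}, T_{π*_8}, T_{π*_10}, …` form an
infinite antichain for the induced subgraph relation: for all even `m, n` with
`6 ≤ m < n`, `T_{π*_m}` is not isomorphic to an induced subgraph of `T_{π*_n}`. -/
theorem Tgraph_pistar_antichain (m n : ℕ) (hme : Even m) (hne : Even n)
    (hm : 6 ≤ m) (hmn : m < n) :
    ¬ IsInducedSubgraph (Tgraph (pistarFin m)) (Tgraph (pistarFin n)) := by
  intro h
  have hn : 6 ≤ n := by omega
  have hτ := pistarFin_involutive hne hn
  have hcontained := Tgraph.contained_of_isInducedSubgraph (pistarFin_involutive hme hm).bijective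
    (fun i => by rw [pistarFin_val hme hm]; exact add_pistarNat_add_four_le hme hm i.isLt)
    (hτ.toPerm _) h
  rw [Function.Involutive.toPerm_symm, or_self, Function.Involutive.coe_toPerm] at hcontained
  refine pistar_not_contained hme hne hm hmn ?_
  rwa [pistar_eq hme hm, pistar_eq hne hn,
    contained_comp_iff (g := (· + 1)) fun _ _ h => Nat.add_lt_add_right h 1]
end

section
/- For every biconvex permutation π of {1,...,n} with witnessing convex permutations μ and ρ, the S-graph S_π is a biconvex bipartite graph that is P_8-free and P̃_8-free. -/
namespace SAux

def isB {n : ℕ} : Fin n ⊕ Fin n ⊕ Fin n → Bool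
  | Sum.inr (Sum.inl _) => true
  | _ => false

variable {n : ℕ} {μ ρ : Fin n → Fin n}

lemma adj_BA (i j : Fin n) :
    (Sgraph μ ρ).Adj (Sum.inr (Sum.inl i)) (Sum.inl j) ↔ j ≤ ρ i := by
  simp [Sgraph, SimpleGraph.fromRel_adj]

lemma adj_AB (i j : Fin n) :
    (Sgraph μ ρ).Adj (Sum.inl j) (Sum.inr (Sum.inl i)) ↔ j ≤ ρ i := by
  simp [Sgraph, SimpleGraph.fromRel_adj]

lemma adj_BC (i j : Fin n) :
    (Sgraph μ ρ).Adj (Sum.inr (Sum.inl i)) (Sum.inr (Sum.inr j)) ↔ j ≤ μ i := by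
  simp [Sgraph, SimpleGraph.fromRel_adj]

lemma adj_CB (i j : Fin n) :
    (Sgraph μ ρ).Adj (Sum.inr (Sum.inr j)) (Sum.inr (Sum.inl i)) ↔ j ≤ μ i := by
  simp [Sgraph, SimpleGraph.fromRel_adj]

lemma adj_cases {u v : Fin n ⊕ Fin n ⊕ Fin n} (h : (Sgraph μ ρ).Adj u v) :
    isB u = true ∧ isB v = false ∨ isB u = false ∧ isB v = true := by
  rcases u with j | i | j <;> rcases v with j' | i' | j' <;>
    simp_all [Sgraph, SimpleGraph.fromRel_adj, isB]

lemma notB_cases {x : Fin n ⊕ Fin n ⊕ Fin n} (h : isB x = false) :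
    (∃ j, x = Sum.inl j) ∨ (∃ j, x = Sum.inr (Sum.inr j)) := by
  rcases x with j | i | j
  · exact Or.inl ⟨j, rfl⟩
  · simp [isB] at h
  · exact Or.inr ⟨j, rfl⟩

lemma B_cases {x : Fin n ⊕ Fin n ⊕ Fin n} (h : isB x = true) :
    ∃ i, x = Sum.inr (Sum.inl i) := by
  rcases x with j | i | j
  · simp [isB] at h
  · exact ⟨i, rfl⟩
  · simp [isB] at h

lemma adj_toA {w : Fin n ⊕ Fin n ⊕ Fin n} {j : Fin n}
    (h : (Sgraph μ ρ).Adj w (Sum.inl j)) :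
    ∃ i, w = Sum.inr (Sum.inl i) ∧ j ≤ ρ i := by
  rcases w with j' | i | j'
  · simp [Sgraph, SimpleGraph.fromRel_adj] at h
  · exact ⟨i, rfl, (adj_BA i j).mp h⟩
  · simp [Sgraph, SimpleGraph.fromRel_adj] at h

lemma adj_toC {w : Fin n ⊕ Fin n ⊕ Fin n} {j : Fin n}
    (h : (Sgraph μ ρ).Adj w (Sum.inr (Sum.inr j))) :
    ∃ i, w = Sum.inr (Sum.inl i) ∧ j ≤ μ i := by
  rcases w with j' | i | j'
  · simp [Sgraph, SimpleGraph.fromRel_adj] at h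
  · exact ⟨i, rfl, (adj_BC i j).mp h⟩
  · simp [Sgraph, SimpleGraph.fromRel_adj] at h

lemma crossA {j j' : Fin n} {w w' : Fin n ⊕ Fin n ⊕ Fin n}
    (h1 : (Sgraph μ ρ).Adj w (Sum.inl j)) (h2 : ¬ (Sgraph μ ρ).Adj w (Sum.inl j'))
    (h3 : (Sgraph μ ρ).Adj w' (Sum.inl j')) (h4 : ¬ (Sgraph μ ρ).Adj w' (Sum.inl j)) :
    False := by
  obtain ⟨i1, rfl, hj1⟩ := adj_toA h1
  obtain ⟨i2, rfl, hj2⟩ := adj_toA h3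
  rw [adj_BA] at h2 h4
  exact absurd (lt_of_le_of_lt hj1 (not_le.mp h2))
    (not_lt.mpr (le_of_lt (lt_of_le_of_lt hj2 (not_le.mp h4))))

lemma crossC {j j' : Fin n} {w w' : Fin n ⊕ Fin n ⊕ Fin n}
    (h1 : (Sgraph μ ρ).Adj w (Sum.inr (Sum.inr j)))
    (h2 : ¬ (Sgraph μ ρ).Adj w (Sum.inr (Sum.inr j')))
    (h3 : (Sgraph μ ρ).Adj w' (Sum.inr (Sum.inr j')))
    (h4 : ¬ (Sgraph μ ρ).Adj w' (Sum.inr (Sum.inr j))) :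
    False := by
  obtain ⟨i1, rfl, hj1⟩ := adj_toC h1
  obtain ⟨i2, rfl, hj2⟩ := adj_toC h3
  rw [adj_BC] at h2 h4
  exact absurd (lt_of_le_of_lt hj1 (not_le.mp h2))
    (not_lt.mpr (le_of_lt (lt_of_le_of_lt hj2 (not_le.mp h4))))

lemma antichain3 {x1 x2 x3 : Fin n ⊕ Fin n ⊕ Fin n}
    (h1 : isB x1 = false) (h2 : isB x2 = false) (h3 : isB x3 = false)
    (p12 : (∃ w, (Sgraph μ ρ).Adj w x1 ∧ ¬ (Sgraph μ ρ).Adj w x2) ∧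
           (∃ w, (Sgraph μ ρ).Adj w x2 ∧ ¬ (Sgraph μ ρ).Adj w x1))
    (p13 : (∃ w, (Sgraph μ ρ).Adj w x1 ∧ ¬ (Sgraph μ ρ).Adj w x3) ∧
           (∃ w, (Sgraph μ ρ).Adj w x3 ∧ ¬ (Sgraph μ ρ).Adj w x1))
    (p23 : (∃ w, (Sgraph μ ρ).Adj w x2 ∧ ¬ (Sgraph μ ρ).Adj w x3) ∧
           (∃ w, (Sgraph μ ρ).Adj w x3 ∧ ¬ (Sgraph μ ρ).Adj w x2)) :
    False := by
  rcases notB_cases h1 with ⟨j1, rfl⟩ | ⟨j1, rfl⟩ <;>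
  rcases notB_cases h2 with ⟨j2, rfl⟩ | ⟨j2, rfl⟩ <;>
  rcases notB_cases h3 with ⟨j3, rfl⟩ | ⟨j3, rfl⟩ <;>
  first
    | (obtain ⟨⟨w, a1, a2⟩, ⟨w', a3, a4⟩⟩ := p12
       first | exact crossA a1 a2 a3 a4 | exact crossC a1 a2 a3 a4)
    | (obtain ⟨⟨w, a1, a2⟩, ⟨w', a3, a4⟩⟩ := p13
       first | exact crossA a1 a2 a3 a4 | exact crossC a1 a2 a3 a4)
    | (obtain ⟨⟨w, a1, a2⟩, ⟨w', a3, a4⟩⟩ := p23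
       first | exact crossA a1 a2 a3 a4 | exact crossC a1 a2 a3 a4)

end SAux

open SAux in

/-- For every biconvex permutation `π` of `{1,…,n}` with witnessing
convex permutations `μ` and `ρ` (so `π = μ ∘ ρ⁻¹`), the S-graph `S_π` is a
biconvex bipartite graph which is `P_8`-free and `P̃_8`-free. -/
theorem Sgraph_biconvex_p8_p8tilde_free (n : ℕ) (μ ρ : Fin n → Fin n)
    (hμb : Function.Bijective μ) (hρb : Function.Bijective ρ)
    (hμc : IsConvexFun μ) (hρc : IsConvexFun ρ) :
    IsBipartite (Sgraph μ ρ) ∧ IsBiconvex (Sgraph μ ρ) ∧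
      HFree (pathN 8) (Sgraph μ ρ) ∧ HFree p8tilde (Sgraph μ ρ) := by
  constructor
  · exact ⟨isB, fun u v h => by
      rcases adj_cases h with ⟨h1, h2⟩ | ⟨h1, h2⟩ <;> simp [h1, h2]⟩
  refine ⟨?_, ?_, ?_⟩
  · refine ⟨{v | isB v = true},
      Sum.elim (fun j => n - 1 - j.val)
        (Sum.elim (fun i => 2 * n + i.val) (fun j => n + j.val)), ?_, ?_, ?_, ?_⟩
    · intro u v h
      rcases u with ⟨a, ha⟩ | ⟨b, hb⟩ | ⟨c, hc⟩ <;>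
        rcases v with ⟨a', ha'⟩ | ⟨b', hb'⟩ | ⟨c', hc'⟩ <;>
        simp only [Sum.elim_inl, Sum.elim_inr] at h <;>
        simp only [Sum.inl.injEq, Sum.inr.injEq, Fin.mk.injEq, reduceCtorEq] <;>
        omega
    · intro u v h
      rcases adj_cases h with ⟨h1, h2⟩ | ⟨h1, h2⟩ <;>
        simp [Set.mem_setOf_eq, h1, h2]
    · intro x hx u v w hu hv hw huv hvw hxu hxw
      rw [Set.mem_setOf_eq] at hx
      obtain ⟨i, rfl⟩ := B_cases hx
      rw [Set.mem_setOf_eq, Bool.not_eq_true] at hu hv hw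
      rcases notB_cases hu with ⟨ju, rfl⟩ | ⟨ju, rfl⟩ <;>
        rcases notB_cases hv with ⟨jv, rfl⟩ | ⟨jv, rfl⟩ <;>
        rcases notB_cases hw with ⟨jw, rfl⟩ | ⟨jw, rfl⟩ <;>
        simp only [Sum.elim_inl, Sum.elim_inr] at huv hvw <;>
        simp only [adj_BA, adj_BC] at hxu hxw ⊢ <;>
        simp only [Fin.le_def] at hxu hxw ⊢ <;>
        (have b1 := ju.isLt; have b2 := jv.isLt; have b3 := jw.isLt; omega)
    · intro y hy u v w hu hv hw huv hvw hyu hyw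
      rw [Set.mem_setOf_eq] at hu hv hw
      rw [Set.mem_setOf_eq, Bool.not_eq_true] at hy
      obtain ⟨iu, rfl⟩ := B_cases hu
      obtain ⟨iv, rfl⟩ := B_cases hv
      obtain ⟨iw, rfl⟩ := B_cases hw
      simp only [Sum.elim_inl, Sum.elim_inr] at huv hvw
      have l1 : iu ≤ iv := by rw [Fin.le_def]; omega
      have l2 : iv ≤ iw := by rw [Fin.le_def]; omega
      rcases notB_cases hy with ⟨j, rfl⟩ | ⟨j, rfl⟩
      · rw [adj_AB] at hyu hyw ⊢
        exact hρc j iu iv iw l1 l2 hyu hyw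
      · rw [adj_CB] at hyu hyw ⊢
        exact hμc j iu iv iw l1 l2 hyu hyw
  · rintro ⟨f, hinj, hadj⟩
    have pD : ∀ u v : Fin 8, (pathN 8).Adj u v ↔
        u ≠ v ∧ (u.val + 1 = v.val ∨ v.val + 1 = u.val) := by
      intro u v; unfold pathN; exact SimpleGraph.fromRel_adj _ u v
    have hA : ∀ u v : Fin 8, (pathN 8).Adj u v → (Sgraph μ ρ).Adj (f u) (f v) :=
      fun u v h => (hadj u v).mpr h
    have hN : ∀ u v : Fin 8, ¬ (pathN 8).Adj u v → ¬ (Sgraph μ ρ).Adj (f u) (f v) :=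
      fun u v h hc => h ((hadj u v).mp hc)
    have step : ∀ u v : Fin 8, (pathN 8).Adj u v → ∀ b, isB (f u) = b → isB (f v) = !b := by
      intro u v h b hb
      rcases adj_cases (hA u v h) with ⟨x, y⟩ | ⟨x, y⟩ <;> rw [x] at hb <;> rw [← hb] <;>
        simp [y]
    cases hb0 : isB (f 0) with
    | false =>
      have b1 := step 0 1 ((pD 0 1).mpr (by decide)) _ hb0
      have b2 := step 1 2 ((pD 1 2).mpr (by decide)) _ b1
      have b3 := step 2 3 ((pD 2 3).mpr (by decide)) _ b2
      have b4 := step 3 4 ((pD 3 4).mpr (by decide)) _ b3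
      have b5 := step 4 5 ((pD 4 5).mpr (by decide)) _ b4
      have b6 := step 5 6 ((pD 5 6).mpr (by decide)) _ b5
      simp only [Bool.not_false, Bool.not_true] at b1 b2 b3 b4 b5 b6
      exact antichain3 b2 b4 b6
        ⟨⟨f 1, hA 1 2 ((pD 1 2).mpr (by decide)), hN 1 4 (by rw [pD]; decide)⟩,
         ⟨f 5, hA 5 4 ((pD 5 4).mpr (by decide)), hN 5 2 (by rw [pD]; decide)⟩⟩
        ⟨⟨f 1, hA 1 2 ((pD 1 2).mpr (by decide)), hN 1 6 (by rw [pD]; decide)⟩,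
         ⟨f 5, hA 5 6 ((pD 5 6).mpr (by decide)), hN 5 2 (by rw [pD]; decide)⟩⟩
        ⟨⟨f 3, hA 3 4 ((pD 3 4).mpr (by decide)), hN 3 6 (by rw [pD]; decide)⟩,
         ⟨f 7, hA 7 6 ((pD 7 6).mpr (by decide)), hN 7 4 (by rw [pD]; decide)⟩⟩
    | true =>
      have b1 := step 0 1 ((pD 0 1).mpr (by decide)) _ hb0
      have b2 := step 1 2 ((pD 1 2).mpr (by decide)) _ b1
      have b3 := step 2 3 ((pD 2 3).mpr (by decide)) _ b2
      have b4 := step 3 4 ((pD 3 4).mpr (by decide)) _ b3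
      have b5 := step 4 5 ((pD 4 5).mpr (by decide)) _ b4
      simp only [Bool.not_false, Bool.not_true] at b1 b2 b3 b4 b5
      exact antichain3 b1 b3 b5
        ⟨⟨f 0, hA 0 1 ((pD 0 1).mpr (by decide)), hN 0 3 (by rw [pD]; decide)⟩,
         ⟨f 4, hA 4 3 ((pD 4 3).mpr (by decide)), hN 4 1 (by rw [pD]; decide)⟩⟩
        ⟨⟨f 0, hA 0 1 ((pD 0 1).mpr (by decide)), hN 0 5 (by rw [pD]; decide)⟩,
         ⟨f 4, hA 4 5 ((pD 4 5).mpr (by decide)), hN 4 1 (by rw [pD]; decide)⟩⟩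
        ⟨⟨f 2, hA 2 3 ((pD 2 3).mpr (by decide)), hN 2 5 (by rw [pD]; decide)⟩,
         ⟨f 6, hA 6 5 ((pD 6 5).mpr (by decide)), hN 6 3 (by rw [pD]; decide)⟩⟩
  · rintro ⟨f, hinj, hadj⟩
    have pD : ∀ u v : Fin 8, p8tilde.Adj u v ↔
        u ≠ v ∧ ((u.val % 2 = 0 ∧ v.val % 2 = 1 ∧ u.val + 1 ≠ v.val ∧ v.val + 1 ≠ u.val) ∨
          (v.val % 2 = 0 ∧ u.val % 2 = 1 ∧ v.val + 1 ≠ u.val ∧ u.val + 1 ≠ v.val)) := by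
      intro u v; unfold p8tilde; exact SimpleGraph.fromRel_adj _ u v
    have hA : ∀ u v : Fin 8, p8tilde.Adj u v → (Sgraph μ ρ).Adj (f u) (f v) :=
      fun u v h => (hadj u v).mpr h
    have hN : ∀ u v : Fin 8, ¬ p8tilde.Adj u v → ¬ (Sgraph μ ρ).Adj (f u) (f v) :=
      fun u v h hc => h ((hadj u v).mp hc)
    have step : ∀ u v : Fin 8, p8tilde.Adj u v → ∀ b, isB (f u) = b → isB (f v) = !b := by
      intro u v h b hb
      rcases adj_cases (hA u v h) with ⟨x, y⟩ | ⟨x, y⟩ <;> rw [x] at hb <;> rw [← hb] <;>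
        simp [y]
    cases hb0 : isB (f 0) with
    | false =>
      have b3 := step 0 3 ((pD 0 3).mpr (by decide)) _ hb0
      have b6 := step 3 6 ((pD 3 6).mpr (by decide)) _ b3
      have b1 := step 6 1 ((pD 6 1).mpr (by decide)) _ b6
      have b4 := step 1 4 ((pD 1 4).mpr (by decide)) _ b1
      have b7 := step 4 7 ((pD 4 7).mpr (by decide)) _ b4
      have b2 := step 7 2 ((pD 7 2).mpr (by decide)) _ b7
      simp only [Bool.not_false, Bool.not_true] at b3 b6 b1 b4 b7 b2
      exact antichain3 b2 b4 b6
        ⟨⟨f 5, hA 5 2 ((pD 5 2).mpr (by decide)), hN 5 4 (by rw [pD]; decide)⟩,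
         ⟨f 1, hA 1 4 ((pD 1 4).mpr (by decide)), hN 1 2 (by rw [pD]; decide)⟩⟩
        ⟨⟨f 5, hA 5 2 ((pD 5 2).mpr (by decide)), hN 5 6 (by rw [pD]; decide)⟩,
         ⟨f 1, hA 1 6 ((pD 1 6).mpr (by decide)), hN 1 2 (by rw [pD]; decide)⟩⟩
        ⟨⟨f 7, hA 7 4 ((pD 7 4).mpr (by decide)), hN 7 6 (by rw [pD]; decide)⟩,
         ⟨f 3, hA 3 6 ((pD 3 6).mpr (by decide)), hN 3 4 (by rw [pD]; decide)⟩⟩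
    | true =>
      have b3 := step 0 3 ((pD 0 3).mpr (by decide)) _ hb0
      have b6 := step 3 6 ((pD 3 6).mpr (by decide)) _ b3
      have b1 := step 6 1 ((pD 6 1).mpr (by decide)) _ b6
      have b4 := step 1 4 ((pD 1 4).mpr (by decide)) _ b1
      have b7 := step 4 7 ((pD 4 7).mpr (by decide)) _ b4
      have b2 := step 7 2 ((pD 7 2).mpr (by decide)) _ b7
      have b5 := step 2 5 ((pD 2 5).mpr (by decide)) _ b2
      simp only [Bool.not_false, Bool.not_true] at b3 b6 b1 b4 b7 b2 b5
      exact antichain3 b1 b3 b5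
        ⟨⟨f 4, hA 4 1 ((pD 4 1).mpr (by decide)), hN 4 3 (by rw [pD]; decide)⟩,
         ⟨f 0, hA 0 3 ((pD 0 3).mpr (by decide)), hN 0 1 (by rw [pD]; decide)⟩⟩
        ⟨⟨f 4, hA 4 1 ((pD 4 1).mpr (by decide)), hN 4 5 (by rw [pD]; decide)⟩,
         ⟨f 0, hA 0 5 ((pD 0 5).mpr (by decide)), hN 0 1 (by rw [pD]; decide)⟩⟩
        ⟨⟨f 6, hA 6 3 ((pD 6 3).mpr (by decide)), hN 6 5 (by rw [pD]; decide)⟩,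
         ⟨f 2, hA 2 5 ((pD 2 5).mpr (by decide)), hN 2 3 (by rw [pD]; decide)⟩⟩
end

section
/- For every even n ≥ 8, the permutations ρ*_n and μ*_n are convex, and π*_n = μ*_n ∘ (ρ*_n)^{-1}; consequently π*_n is a biconvex permutation. -/
section Aux

variable {n : ℕ}

lemma rhostarVal_range (he : n % 2 = 0) (hn : 8 ≤ n) {p : ℕ} (h1 : 1 ≤ p) (h2 : p ≤ n) :
    1 ≤ rhostarVal n p ∧ rhostarVal n p ≤ n := by
  unfold rhostarVal; split_ifs <;> omega

lemma mustarVal_range (he : n % 2 = 0) (hn : 8 ≤ n) {p : ℕ} (h1 : 1 ≤ p) (h2 : p ≤ n) :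
    1 ≤ mustarVal n p ∧ mustarVal n p ≤ n := by
  unfold mustarVal; split_ifs <;> omega

lemma rhostarVal_inj (he : n % 2 = 0) (hn : 8 ≤ n) {p q : ℕ} (hp1 : 1 ≤ p) (hp2 : p ≤ n)
    (hq1 : 1 ≤ q) (hq2 : q ≤ n) (h : rhostarVal n p = rhostarVal n q) : p = q := by
  unfold rhostarVal at h; split_ifs at h <;> omega

lemma mustarVal_inj (he : n % 2 = 0) (hn : 8 ≤ n) {p q : ℕ} (hp1 : 1 ≤ p) (hp2 : p ≤ n)
    (hq1 : 1 ≤ q) (hq2 : q ≤ n) (h : mustarVal n p = mustarVal n q) : p = q := by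
  unfold mustarVal at h; split_ifs at h <;> omega

lemma rhostarVal_mono (he : n % 2 = 0) (hn : 8 ≤ n) {a b : ℕ} (h1 : 1 ≤ a) (hab : a ≤ b)
    (hb : b ≤ n / 2 + 2) : rhostarVal n a ≤ rhostarVal n b := by
  unfold rhostarVal; split_ifs <;> omega

lemma rhostarVal_anti (he : n % 2 = 0) (hn : 8 ≤ n) {a b : ℕ} (h1 : n / 2 + 2 ≤ a)
    (hab : a ≤ b) (hb : b ≤ n) : rhostarVal n b ≤ rhostarVal n a := by
  unfold rhostarVal; split_ifs <;> omega

lemma mustarVal_mono (he : n % 2 = 0) (hn : 8 ≤ n) {a b : ℕ} (h1 : 1 ≤ a) (hab : a ≤ b)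
    (hb : b ≤ n / 2) : mustarVal n a ≤ mustarVal n b := by
  unfold mustarVal; split_ifs <;> omega

lemma mustarVal_anti (he : n % 2 = 0) (hn : 8 ≤ n) {a b : ℕ} (h1 : n / 2 ≤ a)
    (hab : a ≤ b) (hb : b ≤ n) : mustarVal n b ≤ mustarVal n a := by
  unfold mustarVal; split_ifs <;> omega

set_option maxHeartbeats 2000000 in
lemma comp_val (he : n % 2 = 0) (hn : 8 ≤ n) {p : ℕ} (h1 : 1 ≤ p) (h2 : p ≤ n) :
    pi2starVal n (rhostarVal n p) = mustarVal n p := by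
  unfold rhostarVal
  split_ifs with ha hb hc hd <;>
    (unfold pi2starVal mustarVal; split_ifs <;> omega)

lemma rhostarFin_val (he : n % 2 = 0) (hn : 8 ≤ n) (i : Fin n) :
    (rhostarFin n i).val = rhostarVal n (i.val + 1) - 1 := by
  have h := rhostarVal_range he hn (p := i.val + 1) (by omega) (by omega)
  simp only [rhostarFin]
  exact Nat.mod_eq_of_lt (by omega)

lemma mustarFin_val (he : n % 2 = 0) (hn : 8 ≤ n) (i : Fin n) :
    (mustarFin n i).val = mustarVal n (i.val + 1) - 1 := by
  have h := mustarVal_range he hn (p := i.val + 1) (by omega) (by omega)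
  simp only [mustarFin]
  exact Nat.mod_eq_of_lt (by omega)

lemma rhostarFin_bij (he : n % 2 = 0) (hn : 8 ≤ n) : Function.Bijective (rhostarFin n) := by
  rw [← Finite.injective_iff_bijective]
  intro i j h
  have hv : (rhostarFin n i).val = (rhostarFin n j).val := by rw [h]
  rw [rhostarFin_val he hn, rhostarFin_val he hn] at hv
  have hi := rhostarVal_range he hn (p := i.val + 1) (by omega) (by omega)
  have hj := rhostarVal_range he hn (p := j.val + 1) (by omega) (by omega)
  have := rhostarVal_inj he hn (p := i.val + 1) (q := j.val + 1)
    (by omega) (by omega) (by omega) (by omega) (by omega)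
  exact Fin.ext (by omega)

lemma mustarFin_bij (he : n % 2 = 0) (hn : 8 ≤ n) : Function.Bijective (mustarFin n) := by
  rw [← Finite.injective_iff_bijective]
  intro i j h
  have hv : (mustarFin n i).val = (mustarFin n j).val := by rw [h]
  rw [mustarFin_val he hn, mustarFin_val he hn] at hv
  have hi := mustarVal_range he hn (p := i.val + 1) (by omega) (by omega)
  have hj := mustarVal_range he hn (p := j.val + 1) (by omega) (by omega)
  have := mustarVal_inj he hn (p := i.val + 1) (q := j.val + 1)
    (by omega) (by omega) (by omega) (by omega) (by omega)
  exact Fin.ext (by omega)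

lemma rhostarFin_convex (he : n % 2 = 0) (hn : 8 ≤ n) : IsConvexFun (rhostarFin n) := by
  intro i p q r hpq hqr hp hr
  rw [Fin.le_def] at hpq hqr hp hr ⊢
  rw [rhostarFin_val he hn] at hp hr ⊢
  have hrp := rhostarVal_range he hn (p := p.val + 1) (by omega) (by omega)
  have hrr := rhostarVal_range he hn (p := r.val + 1) (by omega) (by omega)
  by_cases hq : q.val + 1 ≤ n / 2 + 2
  · have := rhostarVal_mono he hn (a := p.val + 1) (b := q.val + 1) (by omega) (by omega) hq
    omega
  · have := rhostarVal_anti he hn (a := q.val + 1) (b := r.val + 1) (by omega) (by omega)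
      (by omega)
    omega

lemma mustarFin_convex (he : n % 2 = 0) (hn : 8 ≤ n) : IsConvexFun (mustarFin n) := by
  intro i p q r hpq hqr hp hr
  rw [Fin.le_def] at hpq hqr hp hr ⊢
  rw [mustarFin_val he hn] at hp hr ⊢
  have hrp := mustarVal_range he hn (p := p.val + 1) (by omega) (by omega)
  have hrr := mustarVal_range he hn (p := r.val + 1) (by omega) (by omega)
  by_cases hq : q.val + 1 ≤ n / 2
  · have := mustarVal_mono he hn (a := p.val + 1) (b := q.val + 1) (by omega) (by omega) hq
    omega
  · have := mustarVal_anti he hn (a := q.val + 1) (b := r.val + 1) (by omega) (by omega)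
      (by omega)
    omega

lemma comp_fin (he : n % 2 = 0) (hn : 8 ≤ n) (i : Fin n) :
    pi2starFin n (rhostarFin n i) = mustarFin n i := by
  have hr := rhostarVal_range he hn (p := i.val + 1) (by omega) (by omega)
  have hc := comp_val he hn (p := i.val + 1) (by omega) (by omega)
  apply Fin.ext
  simp only [pi2starFin, mustarFin]
  rw [rhostarFin_val he hn]
  have : rhostarVal n (i.val + 1) - 1 + 1 = rhostarVal n (i.val + 1) := by omega
  rw [this, hc]

end Aux

/-- For every even `n ≥ 8`, `ρ*_n` and `μ*_n` are (bijective)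
convex permutations and `π*_n = μ*_n ∘ (ρ*_n)⁻¹` (equivalently,
`π*_n ∘ ρ*_n = μ*_n`); consequently `π*_n` is a biconvex permutation. -/
theorem pi2star_biconvex (n : ℕ) (hne : Even n) (hn : 8 ≤ n) :
    Function.Bijective (rhostarFin n) ∧ IsConvexFun (rhostarFin n) ∧
    Function.Bijective (mustarFin n) ∧ IsConvexFun (mustarFin n) ∧
    (∀ i, pi2starFin n (rhostarFin n i) = mustarFin n i) ∧
    (∃ μ ρ : Fin n → Fin n, Function.Bijective μ ∧ Function.Bijective ρ ∧
      IsConvexFun μ ∧ IsConvexFun ρ ∧ ∀ i, pi2starFin n (ρ i) = μ i) := by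
  have he : n % 2 = 0 := Nat.even_iff.mp hne
  exact ⟨rhostarFin_bij he hn, rhostarFin_convex he hn, mustarFin_bij he hn,
    mustarFin_convex he hn, comp_fin he hn,
    mustarFin n, rhostarFin n, mustarFin_bij he hn, rhostarFin_bij he hn,
    mustarFin_convex he hn, rhostarFin_convex he hn, comp_fin he hn⟩
end

section
/- The permutation graphs G_{π*_8}, G_{π*_10}, G_{π*_12}, ... form an infinite antichain with respect to the (not necessarily induced) subgraph relation: for all even m, n with 8 ≤ m ≠ n, the graph G_{π*_m} is not isomorphic to a subgraph of G_{π*_n}. -/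
def EdgeP (n p q : ℕ) : Prop :=
  (p=1∧q=4)∨(p=2∧q=4)∨(p=3∧q=4)∨(p=3∧q=6)∨
  (p%2=1∧5≤p∧p+1≤n∧q=p+1)∨(p%2=1∧5≤p∧p+5≤n∧q=p+3)∨
  (p+3=n∧q+1=n)∨(p+3=n∧q=n)

def SymE (n a b : ℕ) : Prop := EdgeP n a b ∨ EdgeP n b a

def PRel (n p v : ℕ) : Prop :=
  (p=1∧v=2) ∨ (p=2∧v=3) ∨ (p=3∧v=5) ∨ (p=4∧v=1) ∨ (p+3=n∧v=n) ∨
  (p+2=n∧v+4=n) ∨ (p+1=n∧v+1=n) ∨ (p=n∧v+2=n) ∨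
  (p%2=1∧5≤p∧p+5≤n∧v=p+2) ∨ (p%2=0∧6≤p∧p+4≤n∧v+2=p)

lemma val_rel (n p : ℕ) (hn : 8 ≤ n) (he : n % 2 = 0) (hp : 1 ≤ p) (hpn : p ≤ n) :
    PRel n p (pi2starVal n p) := by
  obtain ⟨v, hv⟩ : ∃ v, pi2starVal n p = v := ⟨_, rfl⟩
  rw [hv]
  rw [pi2starVal] at hv
  unfold PRel
  split_ifs at hv <;>
    first
      | (left; omega)
      | (right; left; omega)
      | (right; right; left; omega)
      | (right; right; right; left; omega)
      | (right; right; right; right; left; omega)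
      | (right; right; right; right; right; left; omega)
      | (right; right; right; right; right; right; left; omega)
      | (right; right; right; right; right; right; right; left; omega)
      | (right; right; right; right; right; right; right; right; left; omega)
      | (right; right; right; right; right; right; right; right; right; omega)

set_option maxHeartbeats 1000000 in
lemma val_lt_iff (n : ℕ) (hn : 8 ≤ n) (he : n % 2 = 0) (p q : ℕ) (hp : 1 ≤ p)
    (hpq : p < q) (hq : q ≤ n) :
    pi2starVal n q < pi2starVal n p ↔ EdgeP n p q := by
  have Hp := val_rel n p hn he hp (by omega)
  have Hq := val_rel n q hn he (by omega) hq
  unfold EdgeP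
  unfold PRel at Hp Hq
  rcases Hp with ⟨a,b⟩|⟨a,b⟩|⟨a,b⟩|⟨a,b⟩|⟨a,b⟩|⟨a,b⟩|⟨a,b⟩|⟨a,b⟩|⟨a,c,d,b⟩|⟨a,c,d,b⟩ <;>
    rcases Hq with ⟨a',b'⟩|⟨a',b'⟩|⟨a',b'⟩|⟨a',b'⟩|⟨a',b'⟩|⟨a',b'⟩|⟨a',b'⟩|⟨a',b'⟩|⟨a',c',d',b'⟩|⟨a',c',d',b'⟩ <;>
    omega

lemma edge_lt {n p q : ℕ} (h : EdgeP n p q) : p < q := by unfold EdgeP at h; omega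

lemma symE_symm {n a b : ℕ} (h : SymE n a b) : SymE n b a := h.elim Or.inr Or.inl

lemma symE_ne {n a b : ℕ} (h : SymE n a b) : a ≠ b := by
  rcases h with h|h <;> have := edge_lt h <;> omega

lemma val_sub (n : ℕ) (hn : 8 ≤ n) (he : n % 2 = 0) (k : Fin n) :
    pi2starVal n (k.val + 1) - 1 < n ∧ 1 ≤ pi2starVal n (k.val + 1) := by
  have hk := k.isLt
  have := val_rel n (k.val + 1) hn he (by omega) (by omega)
  unfold PRel at this; omega

lemma adj_iff (n : ℕ) (hn : 8 ≤ n) (he : n % 2 = 0) (i j : Fin n) :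
    (permGraph (pi2starFin n)).Adj i j ↔ SymE n (i.val + 1) (j.val + 1) := by
  have hv : ∀ k : Fin n, (pi2starFin n k).val = pi2starVal n (k.val + 1) - 1 :=
    fun k => Nat.mod_eq_of_lt (val_sub n hn he k).1
  unfold permGraph
  rw [SimpleGraph.fromRel_adj]
  constructor
  · rintro ⟨hne, ⟨hij, hlt⟩ | ⟨hji, hlt⟩⟩
    · left
      rw [← val_lt_iff n hn he (i.val+1) (j.val+1) (by omega)
        (by exact Nat.add_lt_add_right (Fin.lt_def.mp hij) 1) (by have := j.isLt; omega)]
      have h1 := (val_sub n hn he i).2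
      have h2 := (val_sub n hn he j).2
      have h3 := Fin.lt_def.mp hlt
      rw [hv i, hv j] at h3
      omega
    · right
      rw [← val_lt_iff n hn he (j.val+1) (i.val+1) (by omega)
        (by exact Nat.add_lt_add_right (Fin.lt_def.mp hji) 1) (by have := i.isLt; omega)]
      have h1 := (val_sub n hn he i).2
      have h2 := (val_sub n hn he j).2
      have h3 := Fin.lt_def.mp hlt
      rw [hv i, hv j] at h3
      omega
  · rintro (hE | hE)
    · have hlt := edge_lt hE
      have hval := (val_lt_iff n hn he (i.val+1) (j.val+1) (by omega) (by omega)
        (by have := j.isLt; omega)).mpr hE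
      have h1 := (val_sub n hn he i).2
      have h2 := (val_sub n hn he j).2
      exact ⟨Fin.ne_of_val_ne (by omega), Or.inl ⟨Fin.lt_def.mpr (by omega),
        Fin.lt_def.mpr (by rw [hv i, hv j]; omega)⟩⟩
    · have hlt := edge_lt hE
      have hval := (val_lt_iff n hn he (j.val+1) (i.val+1) (by omega) (by omega)
        (by have := i.isLt; omega)).mpr hE
      have h1 := (val_sub n hn he i).2
      have h2 := (val_sub n hn he j).2
      exact ⟨Fin.ne_of_val_ne (by omega), Or.inr ⟨Fin.lt_def.mpr (by omega),
        Fin.lt_def.mpr (by rw [hv i, hv j]; omega)⟩⟩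

section Nbrs
variable {n a b c d x y : ℕ}

lemma nbr1 (hn : 8 ≤ n) (he : n % 2 = 0) (h : SymE n 1 b) : b = 4 := by
  unfold SymE EdgeP at h; omega

lemma nbr2 (hn : 8 ≤ n) (he : n % 2 = 0) (h : SymE n 2 b) : b = 4 := by
  unfold SymE EdgeP at h; omega

lemma nbr3 (hn : 8 ≤ n) (he : n % 2 = 0) (h : SymE n 3 b) : b = 4 ∨ b = 6 := by
  unfold SymE EdgeP at h; omega

lemma nbr4 (hn : 8 ≤ n) (he : n % 2 = 0) (h : SymE n 4 b) : b = 1 ∨ b = 2 ∨ b = 3 := by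
  unfold SymE EdgeP at h; omega

lemma nbrOdd (hn : 8 ≤ n) (he : n % 2 = 0) (h1 : a % 2 = 1) (h2 : 5 ≤ a) (h3 : a + 5 ≤ n)
    (h : SymE n a b) : b = a + 1 ∨ b = a + 3 := by
  unfold SymE EdgeP at h; omega

lemma nbrEven (hn : 8 ≤ n) (he : n % 2 = 0) (h1 : a % 2 = 0) (h2 : 6 ≤ a) (h3 : a + 2 ≤ n)
    (h : SymE n a b) : b + 3 = a ∨ b + 1 = a := by
  unfold SymE EdgeP at h; omega

lemma nbrN1 (hn : 8 ≤ n) (he : n % 2 = 0) (ha : a + 1 = n) (h : SymE n a b) :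
    b + 3 = n ∨ b = n := by
  unfold SymE EdgeP at h; omega

lemma nbrN (hn : 8 ≤ n) (he : n % 2 = 0) (ha : a = n) (h : SymE n a b) :
    b + 3 = n ∨ b + 1 = n := by
  unfold SymE EdgeP at h; omega

lemma noSmall (hn : 8 ≤ n) (he : n % 2 = 0) (hb : b ≤ 3) (hc : c ≤ 3) : ¬ SymE n b c := by
  unfold SymE EdgeP; omega

lemma oddodd (hn : 8 ≤ n) (he : n % 2 = 0) (hx : x % 2 = 1) (hy : y % 2 = 1)
    (h : SymE n x y) : (x + 3 = n ∧ y + 1 = n) ∨ (y + 3 = n ∧ x + 1 = n) := by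
  unfold SymE EdgeP at h; omega

lemma symE_bounds (hn : 8 ≤ n) (h : SymE n a b) : 1 ≤ a ∧ a ≤ n ∧ 1 ≤ b ∧ b ≤ n := by
  unfold SymE EdgeP at h; omega

lemma regimeA (hn : 8 ≤ n) (he : n % 2 = 0) (ha : 1 ≤ a) (han : a ≤ n) :
    a = 1 ∨ a = 2 ∨ a = 3 ∨ a = 4 ∨ a + 3 = n ∨ a + 1 = n ∨ a = n ∨
    (a % 2 = 1 ∧ 5 ≤ a ∧ a + 5 ≤ n) ∨ (a % 2 = 0 ∧ 6 ≤ a ∧ a + 2 ≤ n) := by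
  omega

lemma deg3 (hn : 8 ≤ n) (he : n % 2 = 0) (h1 : SymE n a b) (h2 : SymE n a c)
    (h3 : SymE n a d) (hbc : b ≠ c) (hbd : b ≠ d) (hcd : c ≠ d) :
    a = 4 ∨ a + 3 = n := by
  obtain ⟨ha, han, -⟩ := symE_bounds hn h1
  rcases regimeA hn he ha han with h|h|h|h|h|h|h|⟨p1,p2,p3⟩|⟨p1,p2,p3⟩
  · subst h; have := nbr1 hn he h1; have := nbr1 hn he h2; omega
  · subst h; have := nbr2 hn he h1; have := nbr2 hn he h2; omega
  · subst h
    have := nbr3 hn he h1; have := nbr3 hn he h2; have := nbr3 hn he h3; omega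
  · omega
  · omega
  · have := nbrN1 hn he h h1; have := nbrN1 hn he h h2; have := nbrN1 hn he h h3; omega
  · have := nbrN hn he h h1; have := nbrN hn he h h2; have := nbrN hn he h h3; omega
  · have := nbrOdd hn he p1 p2 p3 h1; have := nbrOdd hn he p1 p2 p3 h2
    have := nbrOdd hn he p1 p2 p3 h3; omega
  · have := nbrEven hn he p1 p2 p3 h1; have := nbrEven hn he p1 p2 p3 h2
    have := nbrEven hn he p1 p2 p3 h3; omega

lemma triangle_lemma (hn : 8 ≤ n) (he : n % 2 = 0) (h1 : SymE n a b) (h2 : SymE n b c)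
    (h3 : SymE n a c) : a = n ∨ a + 1 = n ∨ a + 3 = n := by
  obtain ⟨ha, han, -⟩ := symE_bounds hn h1
  have hbc := symE_ne h2
  rcases regimeA hn he ha han with h|h|h|h|h|h|h|⟨p1,p2,p3⟩|⟨p1,p2,p3⟩
  · subst h; have := nbr1 hn he h1; have := nbr1 hn he h3; omega
  · subst h; have := nbr2 hn he h1; have := nbr2 hn he h3; omega
  · subst h
    have hb := nbr3 hn he h1; have hc := nbr3 hn he h3
    rcases hb with rfl|rfl
    · have := nbr4 hn he h2; omega
    · rcases hc with rfl|rfl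
      · have := nbr4 hn he (symE_symm h2); omega
      · omega
  · subst h
    have hb := nbr4 hn he h1; have hc := nbr4 hn he h3
    exact absurd h2 (noSmall hn he (by omega) (by omega))
  · omega
  · omega
  · omega
  · -- a odd middle: b,c ∈ {a+1,a+3}
    exfalso
    have hb := nbrOdd hn he p1 p2 p3 h1; have hc := nbrOdd hn he p1 p2 p3 h3
    rcases hb with rfl|rfl
    · have hc3 : c = a + 3 := by omega
      subst hc3
      have := nbrEven hn he (by omega) (by omega) (by omega) h2
      omega
    · have hc1 : c = a + 1 := by omega
      subst hc1
      have := nbrEven hn he (by omega) (by omega) (by omega) (symE_symm h2)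
      omega
  · -- a even middle: b,c ∈ {a-3,a-1} both odd
    exfalso
    have hb := nbrEven hn he p1 p2 p3 h1; have hc := nbrEven hn he p1 p2 p3 h3
    have := oddodd hn he (x := b) (y := c) (by omega) (by omega) h2
    omega

end Nbrs

def Fmap {m n : ℕ} (f : Fin m → Fin n) (p : ℕ) : ℕ :=
  if h : p - 1 < m then (f ⟨p - 1, h⟩).val + 1 else 0

def spine (j : ℕ) : ℕ := if j % 2 = 0 then j + 4 else j + 2


set_option maxHeartbeats 2000000

/-- The permutation graphs `G_{π*_8}, G_{π*_10}, G_{π*_12}, …` form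
an infinite antichain for the (not necessarily induced) subgraph relation: for
all even `m, n` with `8 ≤ m`, `8 ≤ n` and `m ≠ n`, `G_{π*_m}` is not isomorphic
to a subgraph of `G_{π*_n}`. -/
theorem permGraph_pi2star_antichain (m n : ℕ) (hme : Even m) (hne : Even n)
    (hm : 8 ≤ m) (hn : 8 ≤ n) (hmn : m ≠ n) :
    ¬ IsSubgraphOf (permGraph (pi2starFin m)) (permGraph (pi2starFin n)) := by
  rintro ⟨f, hinj, hhom⟩
  have hme' : m % 2 = 0 := Nat.even_iff.mp hme
  have hne' : n % 2 = 0 := Nat.even_iff.mp hne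
  rcases Nat.lt_or_ge n m with hgt | hge
  · -- m > n : no injection Fin m → Fin n
    have hc := Fintype.card_le_of_injective f hinj
    simp only [Fintype.card_fin] at hc
    omega
  have hlt : m + 2 ≤ n := by omega
  set F : ℕ → ℕ := Fmap f with hFdef
  have hFeq : ∀ p : ℕ, ∀ h : p - 1 < m, F p = (f ⟨p - 1, h⟩).val + 1 := by
    intro p h; simp only [hFdef, Fmap, dif_pos h]
  have hmap : ∀ p q : ℕ, 1 ≤ p → p ≤ m → 1 ≤ q → q ≤ m → SymE m p q →
      SymE n (F p) (F q) := by
    intro p q hp hpm hq hqm hsym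
    have hp' : p - 1 < m := by omega
    have hq' : q - 1 < m := by omega
    have hadj : (permGraph (pi2starFin m)).Adj ⟨p-1,hp'⟩ ⟨q-1,hq'⟩ := by
      rw [adj_iff m hm hme']
      show SymE m (p - 1 + 1) (q - 1 + 1)
      rw [show p - 1 + 1 = p by omega, show q - 1 + 1 = q by omega]
      exact hsym
    have h2 := hhom _ _ hadj
    rw [adj_iff n hn hne'] at h2
    rw [hFeq p hp', hFeq q hq']
    exact h2
  have hFinj : ∀ p q : ℕ, 1 ≤ p → p ≤ m → 1 ≤ q → q ≤ m → F p = F q → p = q := by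
    intro p q hp hpm hq hqm h
    have hp' : p - 1 < m := by omega
    have hq' : q - 1 < m := by omega
    rw [hFeq p hp', hFeq q hq'] at h
    have h2 : f ⟨p-1,hp'⟩ = f ⟨q-1,hq'⟩ := Fin.val_injective (by omega)
    have h3 := hinj h2
    have h4 : p - 1 = q - 1 := congrArg Fin.val h3
    omega
  have hFb : ∀ p : ℕ, 1 ≤ p → p ≤ m → 1 ≤ F p ∧ F p ≤ n := by
    intro p hp hpm
    have hp' : p - 1 < m := by omega
    rw [hFeq p hp']
    have := (f ⟨p-1,hp'⟩).isLt
    omega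
  -- edges of G_m
  have e14 : SymE m 1 4 := Or.inl (Or.inl ⟨rfl, rfl⟩)
  have e24 : SymE m 2 4 := Or.inl (Or.inr (Or.inl ⟨rfl, rfl⟩))
  have e34 : SymE m 3 4 := Or.inl (Or.inr (Or.inr (Or.inl ⟨rfl, rfl⟩)))
  have e36 : SymE m 3 6 := Or.inl (Or.inr (Or.inr (Or.inr (Or.inl ⟨rfl, rfl⟩))))
  have eT1 : SymE m (m-3) (m-1) :=
    Or.inl (Or.inr (Or.inr (Or.inr (Or.inr (Or.inr (Or.inr (Or.inl ⟨by omega, by omega⟩)))))))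
  have eT2 : SymE m (m-3) m :=
    Or.inl (Or.inr (Or.inr (Or.inr (Or.inr (Or.inr (Or.inr (Or.inr ⟨by omega, rfl⟩)))))))
  have eT3 : SymE m (m-1) m :=
    Or.inl (Or.inr (Or.inr (Or.inr (Or.inr (Or.inl ⟨by omega, by omega, by omega, by omega⟩)))))
  -- images of the triangle vertices
  have sT1 := hmap (m-3) (m-1) (by omega) (by omega) (by omega) (by omega) eT1
  have sT2 := hmap (m-1) m (by omega) (by omega) (by omega) (by omega) eT3
  have sT3 := hmap (m-3) m (by omega) (by omega) (by omega) (by omega) eT2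
  have hT1 := triangle_lemma hn hne' sT1 sT2 sT3
  have hT2 := triangle_lemma hn hne' sT2 (symE_symm sT3) (symE_symm sT1)
  have hT3 := triangle_lemma hn hne' (symE_symm sT2) (symE_symm sT1) (symE_symm sT3)
  -- h1 : SymE n (F m) ?; use sT2 symm : SymE n (F m) (F (m-1)), h2: SymE n (F (m-1)) (F (m-3)) = symm sT1, h3 : SymE n (F m) (F (m-3)) = symm sT3. OK as written.
  -- F 4 = 4
  have h41 := hmap 4 1 (by omega) (by omega) (by omega) (by omega) (symE_symm e14)
  have h42 := hmap 4 2 (by omega) (by omega) (by omega) (by omega) (symE_symm e24)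
  have h43 := hmap 4 3 (by omega) (by omega) (by omega) (by omega) (symE_symm e34)
  have hd12 : F 1 ≠ F 2 := fun h => by have := hFinj 1 2 (by omega) (by omega) (by omega) (by omega) h; omega
  have hd13 : F 1 ≠ F 3 := fun h => by have := hFinj 1 3 (by omega) (by omega) (by omega) (by omega) h; omega
  have hd23 : F 2 ≠ F 3 := fun h => by have := hFinj 2 3 (by omega) (by omega) (by omega) (by omega) h; omega
  have hF4 : F 4 = 4 := by
    rcases deg3 hn hne' h41 h42 h43 hd12 hd13 hd23 with h | h
    · exact h
    · exfalso
      have d1 : F 4 ≠ F (m-3) := fun hE => by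
        have := hFinj 4 (m-3) (by omega) (by omega) (by omega) (by omega) hE; omega
      have d2 : F 4 ≠ F (m-1) := fun hE => by
        have := hFinj 4 (m-1) (by omega) (by omega) (by omega) (by omega) hE; omega
      have d3 : F 4 ≠ F m := fun hE => by
        have := hFinj 4 m (by omega) (by omega) (by omega) (by omega) hE; omega
      have d4 : F (m-3) ≠ F (m-1) := symE_ne sT1
      have d5 : F (m-1) ≠ F m := symE_ne sT2
      have d6 : F (m-3) ≠ F m := symE_ne sT3
      omega
  -- F 3 = 3 and F 6 = 6
  have h36 := hmap 3 6 (by omega) (by omega) (by omega) (by omega) e36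
  have hF3 : F 3 = 3 := by
    have h34 : SymE n 4 (F 3) := by rw [← hF4]; exact h43
    have h3v := nbr4 hn hne' h34
    have hd64 : F 6 ≠ F 4 := fun h => by
      have := hFinj 6 4 (by omega) (by omega) (by omega) (by omega) h; omega
    rcases h3v with h|h|h
    · exfalso; rw [h] at h36; have := nbr1 hn hne' h36; omega
    · exfalso; rw [h] at h36; have := nbr2 hn hne' h36; omega
    · exact h
  have hF6 : F 6 = 6 := by
    rw [hF3] at h36
    have := nbr3 hn hne' h36
    have hd64 : F 6 ≠ F 4 := fun h => by
      have := hFinj 6 4 (by omega) (by omega) (by omega) (by omega) h; omega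
    omega
  -- spine values
  have hsp : ∀ j : ℕ, (j % 2 = 0 → spine j = j + 4) ∧ (j % 2 = 1 → spine j = j + 2) := by
    intro j; unfold spine; split_ifs <;> omega
  -- spine induction
  have key : ∀ j : ℕ, 2 ≤ j → j + 5 ≤ m →
      F (spine (j-1)) = spine (j-1) ∧ F (spine j) = spine j := by
    intro j
    induction j with
    | zero => intro h; omega
    | succ k IH =>
      intro h2 hjm
      by_cases hk1 : k = 1
      · subst hk1
        have e1 : spine 1 = 3 := (hsp 1).2 (by omega)
        have e2 : spine 2 = 6 := (hsp 2).1 (by omega)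
        rw [show (2:ℕ) - 1 = 1 by omega, e1, e2]
        exact ⟨hF3, hF6⟩
      · have hk2 : 2 ≤ k := by omega
        obtain ⟨IH1, IH2⟩ := IH hk2 (by omega)
        rw [show k + 1 - 1 = k by omega]
        refine ⟨IH2, ?_⟩
        by_cases hkp : k % 2 = 0
        · -- spine k = k+4 even, spine (k+1) = k+3, spine (k-1) = k+1
          have s0 : spine k = k + 4 := (hsp k).1 hkp
          have s1 : spine (k+1) = k + 3 := (hsp (k+1)).2 (by omega)
          have s2 : spine (k-1) = k + 1 := by have := (hsp (k-1)).2 (by omega); omega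
          have he1 : SymE m (spine k) (spine (k+1)) := by
            right; rw [s0, s1]
            exact Or.inr (Or.inr (Or.inr (Or.inr (Or.inl
              ⟨by omega, by omega, by omega, by omega⟩))))
          have hstep := hmap (spine k) (spine (k+1)) (by omega) (by omega) (by omega)
            (by omega) he1
          rw [IH2] at hstep
          have hnb := nbrEven hn hne' (a := spine k) (by omega) (by omega) (by omega) hstep
          have hne2 : F (spine (k+1)) ≠ F (spine (k-1)) := fun hE => by
            have := hFinj (spine (k+1)) (spine (k-1)) (by omega) (by omega) (by omega)
              (by omega) hE
            omega
          rw [IH1] at hne2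
          omega
        · -- k odd: spine k = k+2 odd, spine (k+1) = k+5, spine (k-1) = k+3
          have s0 : spine k = k + 2 := (hsp k).2 (by omega)
          have s1 : spine (k+1) = k + 5 := (hsp (k+1)).1 (by omega)
          have s2 : spine (k-1) = k + 3 := by have := (hsp (k-1)).1 (by omega); omega
          have he1 : SymE m (spine k) (spine (k+1)) := by
            left; rw [s0, s1]
            exact Or.inr (Or.inr (Or.inr (Or.inr (Or.inr (Or.inl
              ⟨by omega, by omega, by omega, by omega⟩)))))
          have hstep := hmap (spine k) (spine (k+1)) (by omega) (by omega) (by omega)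
            (by omega) he1
          rw [IH2] at hstep
          have hnb := nbrOdd hn hne' (a := spine k) (by omega) (by omega) (by omega) hstep
          have hne2 : F (spine (k+1)) ≠ F (spine (k-1)) := fun hE => by
            have := hFinj (spine (k+1)) (spine (k-1)) (by omega) (by omega) (by omega)
              (by omega) hE
            omega
          rw [IH1] at hne2
          omega
  -- conclusion
  have hfin := (key (m-5) (by omega) (by omega)).2
  have hsp5 : spine (m-5) = m - 3 := by
    have := (hsp (m-5)).2 (by omega)
    omega
  rw [hsp5] at hfin
  omega
end

section
/- Every connected (P_7, Sun_1)-free bipartite graph that contains an induced 4-cycle is a complete bipartite graph. -/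
private lemma bool_trans' {a b c : Bool} (h1 : a ≠ b) (h2 : c ≠ b) : a = c := by
  revert h1 h2; cases a <;> cases b <;> cases c <;> simp

private lemma sun1_of' {V : Type} (G : SimpleGraph V) (p q r s v : V)
    (h01 : G.Adj p q) (h12 : G.Adj q r) (h23 : G.Adj r s) (h30 : G.Adj s p)
    (h04 : G.Adj p v) (hpr : p ≠ r) (hqs : q ≠ s)
    (n02 : ¬G.Adj p r) (n13 : ¬G.Adj q s) (n14 : ¬G.Adj q v)
    (n24 : ¬G.Adj r v) (n34 : ¬G.Adj s v) :
    IsInducedSubgraph sun1 G := by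
  have hpq := h01.ne
  have hps := h30.ne'
  have hpv := h04.ne
  have hqr := h12.ne
  have hqv : q ≠ v := by rintro rfl; exact n24 h12.symm
  have hrs := h23.ne
  have hrv : r ≠ v := by rintro rfl; exact n02 h04
  have hsv : s ≠ v := by rintro rfl; exact n24 h23
  have s01 := h01.symm; have s12 := h12.symm; have s23 := h23.symm
  have s30 := h30.symm; have s04 := h04.symm
  have m02 : ¬G.Adj r p := fun h => n02 h.symm
  have m13 : ¬G.Adj s q := fun h => n13 h.symm
  have m14 : ¬G.Adj v q := fun h => n14 h.symm
  have m24 : ¬G.Adj v r := fun h => n24 h.symm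
  have m34 : ¬G.Adj v s := fun h => n34 h.symm
  refine ⟨![p,q,r,s,v], ?_, ?_⟩
  · intro i j hij
    fin_cases i <;> fin_cases j <;> simp_all
  · intro i j
    fin_cases i <;> fin_cases j <;>
      simp_all [sun1, SimpleGraph.fromRel_adj, SimpleGraph.irrefl] <;> decide

private lemma pendant' {V : Type} {G : SimpleGraph V} (hsun : HFree sun1 G)
    {c : V → Bool} (hc : ∀ u v, G.Adj u v → c u ≠ c v)
    {p q r s v : V}
    (h01 : G.Adj p q) (h12 : G.Adj q r) (h23 : G.Adj r s) (h30 : G.Adj s p)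
    (hpr : p ≠ r) (hqs : q ≠ s) (hcpr : c p = c r)
    (h04 : G.Adj p v) : G.Adj r v := by
  by_contra hn
  have hcqs : c q = c s := bool_trans' (hc q p h01.symm) (hc s p h30)
  have hcv : c v = c q := bool_trans' (hc v p h04.symm) (hc q p h01.symm)
  have n02 : ¬G.Adj p r := fun h => hc p r h hcpr
  have n13 : ¬G.Adj q s := fun h => hc q s h hcqs
  have n14 : ¬G.Adj q v := fun h => hc q v h hcv.symm
  have n34 : ¬G.Adj s v := fun h => hc s v h (hcqs.symm.trans hcv.symm)
  exact hsun (sun1_of' G p q r s v h01 h12 h23 h30 h04 hpr hqs n02 n13 n14 hn n34)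

/-- Every connected `(P_7, Sun_1)`-free bipartite graph containing
an induced `C_4` is a complete bipartite graph. -/
theorem p7_sun1_free_with_c4_is_complete_bipartite (V : Type) [Fintype V]
    (G : SimpleGraph V) (hconn : G.Connected) (hbip : IsBipartite G)
    (hp7 : HFree (pathN 7) G) (hsun : HFree sun1 G)
    (hc4 : IsInducedSubgraph c4 G) :
    ∃ c : V → Bool, ∀ u v, G.Adj u v ↔ c u ≠ c v := by
  obtain ⟨c, hc⟩ := hbip
  obtain ⟨f, hf, hfa⟩ := hc4
  -- the induced 4-cycle w - x - y - z - w
  set w := f 0 with hwdef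
  set x := f 1 with hxdef
  set y := f 2 with hydef
  set z := f 3 with hzdef
  have e01 : G.Adj w x := (hfa 0 1).mpr (by simp [c4, SimpleGraph.fromRel_adj] <;> decide)
  have e12 : G.Adj x y := (hfa 1 2).mpr (by simp [c4, SimpleGraph.fromRel_adj] <;> decide)
  have e23 : G.Adj y z := (hfa 2 3).mpr (by simp [c4, SimpleGraph.fromRel_adj] <;> decide)
  have e30 : G.Adj z w := (hfa 3 0).mpr (by simp [c4, SimpleGraph.fromRel_adj] <;> decide)
  have hwy : w ≠ y := fun h => by have := hf h; simp at this
  have hxz : x ≠ z := fun h => by have := hf h; simp at this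
  -- colour facts
  have cwy : c w = c y := bool_trans' (hc w x e01) (hc y x e12.symm)
  have cxz : c x = c z := bool_trans' (hc x w e01.symm) (hc z w e30)
  -- closure of A ∪ B under adjacency
  have step : ∀ a b : V, ((G.Adj a x ∧ G.Adj a z) ∨ (G.Adj a w ∧ G.Adj a y)) →
      G.Adj a b → ((G.Adj b x ∧ G.Adj b z) ∨ (G.Adj b w ∧ G.Adj b y)) := by
    intro u v hu huv
    rcases hu with ⟨hux, huz⟩ | ⟨huw, huy⟩
    · -- u ∈ A : show v ∈ B
      right
      by_cases hu1 : u = w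
      · subst hu1
        exact ⟨huv.symm, (pendant' hsun hc e01 e12 e23 e30 hwy hxz cwy huv).symm⟩
      by_cases hu2 : u = y
      · subst hu2
        exact ⟨(pendant' hsun hc e12.symm e01.symm e30.symm e23.symm
            (Ne.symm hwy) hxz cwy.symm huv).symm, huv.symm⟩
      have cuw : c u = c w := bool_trans' (hc u x hux) (hc w x e01)
      have cuy : c u = c y := bool_trans' (hc u x hux) (hc y x e12.symm)
      exact ⟨(pendant' hsun hc hux e01.symm e30.symm huz.symm hu1 hxz cuw huv).symm,
        (pendant' hsun hc hux e12 e23 huz.symm hu2 hxz cuy huv).symm⟩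
    · -- u ∈ B : show v ∈ A
      left
      by_cases hu1 : u = x
      · subst hu1
        exact ⟨huv.symm, (pendant' hsun hc e01.symm e30.symm e23.symm e12.symm
            hxz hwy cxz huv).symm⟩
      by_cases hu2 : u = z
      · subst hu2
        exact ⟨(pendant' hsun hc e30 e01 e12 e23 (Ne.symm hxz) hwy cxz.symm huv).symm,
          huv.symm⟩
      have cux : c u = c x := bool_trans' (hc u w huw) (hc x w e01.symm)
      have cuz : c u = c z := bool_trans' (hc u w huw) (hc z w e30)
      exact ⟨(pendant' hsun hc huw e01 e12 huy.symm hu1 hwy cux huv).symm,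
        (pendant' hsun hc huw e30.symm e23.symm huy.symm hu2 hwy cuz huv).symm⟩
  -- every vertex is in A ∪ B
  have hall : ∀ v : V, (G.Adj v x ∧ G.Adj v z) ∨ (G.Adj v w ∧ G.Adj v y) := by
    have key : ∀ a b : V, G.Walk a b →
        ((G.Adj a x ∧ G.Adj a z) ∨ (G.Adj a w ∧ G.Adj a y)) →
        ((G.Adj b x ∧ G.Adj b z) ∨ (G.Adj b w ∧ G.Adj b y)) := by
      intro a b p
      induction p with
      | nil => exact id
      | cons h _ ih => exact fun ha => ih (step _ _ ha h)
    intro v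
    obtain ⟨p⟩ := hconn.preconnected w v
    exact key w v p (Or.inl ⟨e01, e30.symm⟩)
  -- A is completely joined to B
  have claim1 : ∀ u v : V, (G.Adj u x ∧ G.Adj u z) → (G.Adj v w ∧ G.Adj v y) →
      G.Adj u v := by
    rintro u v ⟨hux, huz⟩ ⟨hvw, hvy⟩
    by_cases hu : u = w
    · subst hu; exact hvw.symm
    have cwu : c w = c u := bool_trans' (hc w x e01) (hc u x hux)
    exact pendant' hsun hc e01 hux.symm huz e30 (fun h => hu h.symm) hxz cwu hvw.symm
  refine ⟨c, fun u v => ⟨hc u v, fun hne => ?_⟩⟩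
  rcases hall u with ⟨hux, huz⟩ | ⟨huw, huy⟩ <;>
    rcases hall v with ⟨hvx, hvz⟩ | ⟨hvw, hvy⟩
  · exact absurd ((bool_trans' (hc u x hux) (hc w x e01)).trans
      (bool_trans' (hc w x e01) (hc v x hvx))) hne
  · exact claim1 u v ⟨hux, huz⟩ ⟨hvw, hvy⟩
  · exact (claim1 v u ⟨hvx, hvz⟩ ⟨huw, huy⟩).symm
  · exact absurd ((bool_trans' (hc u w huw) (hc x w e01.symm)).trans
      (bool_trans' (hc x w e01.symm) (hc v w hvw))) hne
end

section
/- Let G be a P_7-free and C_4-free bipartite graph, and let a_1, a_2, ..., a_7 be seven distinct vertices of G such that a_i is adjacent to a_{i+1} for i = 1, ..., 6 (a copy of P_7 contained in G as a subgraph). Then among the pairs {a_s, a_t} with |s − t| ≥ 2, exactly one is an edge of G, and that edge is either a_1a_6 or a_2a_7. -/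
lemma c4_of_aux {V : Type} (G : SimpleGraph V) (hc4 : HFree c4 G)
    (w x y z : V) (hwy : w ≠ y) (hxz : x ≠ z)
    (e1 : G.Adj w x) (e2 : G.Adj x y) (e3 : G.Adj y z) (e4 : G.Adj z w)
    (n1 : ¬ G.Adj w y) (n2 : ¬ G.Adj x z) : False := by
  have hwx := e1.ne
  have hxy := e2.ne
  have hyz := e3.ne
  have hzw := e4.ne
  apply hc4
  refine ⟨![w,x,y,z], ?_, ?_⟩
  · intro u v huv
    fin_cases u <;> fin_cases v <;> simp_all
  · intro u v
    have n1' : ¬ G.Adj y w := fun h => n1 h.symm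
    have n2' : ¬ G.Adj z x := fun h => n2 h.symm
    have e1' := e1.symm; have e2' := e2.symm; have e3' := e3.symm; have e4' := e4.symm
    fin_cases u <;> fin_cases v <;> simp_all [c4] <;> decide

/-- In a `P_7`-free and `C_4`-free bipartite graph, any copy of
`P_7` contained as a (not necessarily induced) subgraph, with vertices
`a 0, …, a 6`, has exactly one chord, and that chord is either `a 0 a 5`
(i.e. `a_1 a_6`) or `a 1 a 6` (i.e. `a_2 a_7`). -/
theorem p7_copy_has_exactly_one_chord (V : Type) [Fintype V] (G : SimpleGraph V)
    (hbip : IsBipartite G) (hp7 : HFree (pathN 7) G) (hc4 : HFree c4 G)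
    (a : Fin 7 → V) (hinj : Function.Injective a)
    (hpath : ∀ s t : Fin 7, s.val + 1 = t.val → G.Adj (a s) (a t)) :
    (G.Adj (a 0) (a 5) ∨ G.Adj (a 1) (a 6)) ∧
    ¬ (G.Adj (a 0) (a 5) ∧ G.Adj (a 1) (a 6)) ∧
    (∀ s t : Fin 7, s.val + 2 ≤ t.val → G.Adj (a s) (a t) →
      (s = 0 ∧ t = 5) ∨ (s = 1 ∧ t = 6)) := by
  obtain ⟨c, hc⟩ := hbip
  have e01 : G.Adj (a 0) (a 1) := hpath 0 1 rfl
  have e12 : G.Adj (a 1) (a 2) := hpath 1 2 rfl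
  have e23 : G.Adj (a 2) (a 3) := hpath 2 3 rfl
  have e34 : G.Adj (a 3) (a 4) := hpath 3 4 rfl
  have e45 : G.Adj (a 4) (a 5) := hpath 4 5 rfl
  have e56 : G.Adj (a 5) (a 6) := hpath 5 6 rfl
  have b1 : c (a 1) = ! c (a 0) := Bool.eq_not_iff.mpr (Ne.symm (hc _ _ e01))
  have b2 : c (a 2) = c (a 0) := by
    have := Bool.eq_not_iff.mpr (Ne.symm (hc _ _ e12)); rw [this, b1, Bool.not_not]
  have b3 : c (a 3) = ! c (a 0) := by
    have := Bool.eq_not_iff.mpr (Ne.symm (hc _ _ e23)); rw [this, b2]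
  have b4 : c (a 4) = c (a 0) := by
    have := Bool.eq_not_iff.mpr (Ne.symm (hc _ _ e34)); rw [this, b3, Bool.not_not]
  have b5 : c (a 5) = ! c (a 0) := by
    have := Bool.eq_not_iff.mpr (Ne.symm (hc _ _ e45)); rw [this, b4]
  have b6 : c (a 6) = c (a 0) := by
    have := Bool.eq_not_iff.mpr (Ne.symm (hc _ _ e56)); rw [this, b5, Bool.not_not]
  have hcval : ∀ i : Fin 7, c (a i) = (decide (i.val % 2 = 0) = true → c (a 0) = true) ∧
      (decide (i.val % 2 = 0) = false → c (a 0) = false) → True := fun _ _ => trivial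
  clear hcval
  have heven : ∀ u v : Fin 7, u.val % 2 = v.val % 2 → ¬ G.Adj (a u) (a v) := by
    have key : ∀ i : Fin 7, c (a i) = bif decide (i.val % 2 = 0) then c (a 0) else ! c (a 0) := by
      intro i; fin_cases i <;> simp [b1, b2, b3, b4, b5, b6]
    intro u v h had
    apply hc _ _ had
    rw [key u, key v, h]
  have hane : ∀ u v : Fin 7, u ≠ v → a u ≠ a v := fun u v h h' => h (hinj h')
  have h03 : ¬ G.Adj (a 0) (a 3) := fun had =>
    c4_of_aux G hc4 (a 0) (a 1) (a 2) (a 3) (hane 0 2 (by decide)) (hane 1 3 (by decide))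
      e01 e12 e23 had.symm (heven 0 2 rfl) (heven 1 3 rfl)
  have h14 : ¬ G.Adj (a 1) (a 4) := fun had =>
    c4_of_aux G hc4 (a 1) (a 2) (a 3) (a 4) (hane 1 3 (by decide)) (hane 2 4 (by decide))
      e12 e23 e34 had.symm (heven 1 3 rfl) (heven 2 4 rfl)
  have h25 : ¬ G.Adj (a 2) (a 5) := fun had =>
    c4_of_aux G hc4 (a 2) (a 3) (a 4) (a 5) (hane 2 4 (by decide)) (hane 3 5 (by decide))
      e23 e34 e45 had.symm (heven 2 4 rfl) (heven 3 5 rfl)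
  have h36 : ¬ G.Adj (a 3) (a 6) := fun had =>
    c4_of_aux G hc4 (a 3) (a 4) (a 5) (a 6) (hane 3 5 (by decide)) (hane 4 6 (by decide))
      e34 e45 e56 had.symm (heven 3 5 rfl) (heven 4 6 rfl)
  have hnotboth : ¬ (G.Adj (a 0) (a 5) ∧ G.Adj (a 1) (a 6)) := fun ⟨p, q⟩ =>
    c4_of_aux G hc4 (a 0) (a 1) (a 6) (a 5) (hane 0 6 (by decide)) (hane 1 5 (by decide))
      e01 q e56.symm p.symm (heven 0 6 rfl) (heven 1 5 rfl)
  have hone : G.Adj (a 0) (a 5) ∨ G.Adj (a 1) (a 6) := by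
    by_contra h
    push_neg at h
    obtain ⟨h05, h16⟩ := h
    apply hp7
    refine ⟨a, hinj, ?_⟩
    have n02 := heven 0 2 rfl; have n04 := heven 0 4 rfl; have n06 := heven 0 6 rfl
    have n13 := heven 1 3 rfl; have n15 := heven 1 5 rfl; have n24 := heven 2 4 rfl
    have n26 := heven 2 6 rfl; have n35 := heven 3 5 rfl; have n46 := heven 4 6 rfl
    have n20 : ¬ G.Adj (a 2) (a 0) := fun h => n02 h.symm
    have n40 : ¬ G.Adj (a 4) (a 0) := fun h => n04 h.symm
    have n60 : ¬ G.Adj (a 6) (a 0) := fun h => n06 h.symm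
    have n31 : ¬ G.Adj (a 3) (a 1) := fun h => n13 h.symm
    have n51 : ¬ G.Adj (a 5) (a 1) := fun h => n15 h.symm
    have n42 : ¬ G.Adj (a 4) (a 2) := fun h => n24 h.symm
    have n62 : ¬ G.Adj (a 6) (a 2) := fun h => n26 h.symm
    have n53 : ¬ G.Adj (a 5) (a 3) := fun h => n35 h.symm
    have n64 : ¬ G.Adj (a 6) (a 4) := fun h => n46 h.symm
    have h30 : ¬ G.Adj (a 3) (a 0) := fun h => h03 h.symm
    have h41 : ¬ G.Adj (a 4) (a 1) := fun h => h14 h.symm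
    have h52 : ¬ G.Adj (a 5) (a 2) := fun h => h25 h.symm
    have h63 : ¬ G.Adj (a 6) (a 3) := fun h => h36 h.symm
    have h50 : ¬ G.Adj (a 5) (a 0) := fun h => h05 h.symm
    have h61 : ¬ G.Adj (a 6) (a 1) := fun h => h16 h.symm
    have e10 := e01.symm; have e21 := e12.symm; have e32 := e23.symm
    have e43 := e34.symm; have e54 := e45.symm; have e65 := e56.symm
    intro u v
    constructor
    · intro had
      by_contra hnp
      fin_cases u <;> fin_cases v <;>
        first
        | exact G.irrefl had
        | (apply hnp; exact ⟨by decide, by decide⟩)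
        | exact n02 had
        | exact n04 had
        | exact n06 had
        | exact n13 had
        | exact n15 had
        | exact n24 had
        | exact n26 had
        | exact n35 had
        | exact n46 had
        | exact n20 had
        | exact n40 had
        | exact n60 had
        | exact n31 had
        | exact n51 had
        | exact n42 had
        | exact n62 had
        | exact n53 had
        | exact n64 had
        | exact h03 had
        | exact h14 had
        | exact h25 had
        | exact h36 had
        | exact h30 had
        | exact h41 had
        | exact h52 had
        | exact h63 had
        | exact h05 had
        | exact h16 had
        | exact h50 had
        | exact h61 had
    · intro hp
      simp only [pathN, SimpleGraph.fromRel_adj] at hp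
      rcases hp with ⟨hne, h | h⟩
      · exact hpath u v h
      · exact (hpath v u h).symm
  refine ⟨hone, hnotboth, ?_⟩
  intro s t hle had
  fin_cases s <;> fin_cases t <;>
    first
    | exact absurd hle (by decide)
    | exact Or.inl ⟨rfl, rfl⟩
    | exact Or.inr ⟨rfl, rfl⟩
    | exact ((heven 0 2 rfl) had).elim
    | exact ((heven 0 4 rfl) had).elim
    | exact ((heven 0 6 rfl) had).elim
    | exact ((heven 1 3 rfl) had).elim
    | exact ((heven 1 5 rfl) had).elim
    | exact ((heven 2 4 rfl) had).elim
    | exact ((heven 2 6 rfl) had).elim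
    | exact ((heven 3 5 rfl) had).elim
    | exact ((heven 4 6 rfl) had).elim
    | exact (h03 had).elim
    | exact (h14 had).elim
    | exact (h25 had).elim
    | exact (h36 had).elim
end
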